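/- arXiv:2404.10870 — 11 statements merged into one kernel-verified Lean document; each statement's English description precedes it below -/
import Mathlib

section
/- Let G be a group, k a positive natural number, s : Fin k → G, and let π : G →* H be a surjective group homomorphism. Then ρ(G, s) ≤ ρ(H, π ∘ s): the spectral radius does not decrease when passing to a quotient (property (∗) of Proposition 1.4 for the spectral radius). -/
open Filter

/-- The cogrowth count of a marked group `(G, s)`: the number of words of length `n`
in the generators whose product equals the identity. -/
noncomputable def cogrowthCount {G : Type*} [Group G] {k : ℕ} (s : Fin k → G) (n : ℕ) : ℕ :=
  Nat.card {w : Fin n → Fin k | (List.ofFn (fun i => s (w i))).prod = 1}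

/-- The spectral radius of a marked group `(G, s)`:
`ρ(G, s) = limsup_{n → ∞} c(n)^(1/n) / k`. -/
noncomputable def markedSpectralRadius {G : Type*} [Group G] {k : ℕ} (s : Fin k → G) : ℝ :=
  Filter.atTop.limsup fun n : ℕ =>
    (cogrowthCount s n : ℝ) ^ ((1 : ℝ) / n) / k

lemma cogrowthCount_le_comp {G H : Type*} [Group G] [Group H] {k : ℕ}
    (s : Fin k → G) (π : G →* H) (n : ℕ) :
    cogrowthCount s n ≤ cogrowthCount (⇑π ∘ s) n := by
  refine Nat.card_mono (Set.toFinite _) fun w (hw : (List.ofFn fun i => s (w i)).prod = 1) => ?_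
  change (List.ofFn fun i => π (s (w i))).prod = 1
  rw [← map_one π, ← hw, map_list_prod, List.map_ofFn]
  rfl

lemma cogrowthCount_le_pow {G : Type*} [Group G] {k : ℕ} (s : Fin k → G) (n : ℕ) :
    cogrowthCount s n ≤ k ^ n :=
  (Finite.card_subtype_le _).trans_eq (by simp)

lemma cogrowthCount_rpow_div_le_one {G : Type*} [Group G] {k : ℕ} (s : Fin k → G) (n : ℕ) :
    (cogrowthCount s n : ℝ) ^ ((1 : ℝ) / n) / k ≤ 1 := by
  rcases Nat.eq_zero_or_pos k with rfl | hk
  · simp -- `x / 0 = 0`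
  rw [div_le_one (by exact_mod_cast hk)]
  rcases Nat.eq_zero_or_pos n with rfl | hn
  · simpa using (Nat.one_le_cast (α := ℝ)).mpr hk
  calc (cogrowthCount s n : ℝ) ^ ((1 : ℝ) / n)
      ≤ ((k : ℝ) ^ n) ^ ((1 : ℝ) / n) := by
        gcongr
        exact_mod_cast cogrowthCount_le_pow s n
    _ = k := by rw [one_div, Real.pow_rpow_inv_natCast k.cast_nonneg hn.ne']

lemma markedSpectralRadius_le_of_cogrowthCount_le {G H : Type*} [Group G] [Group H] {k : ℕ}
    {s : Fin k → G} {t : Fin k → H} (h : ∀ n, cogrowthCount s n ≤ cogrowthCount t n) :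
    markedSpectralRadius s ≤ markedSpectralRadius t := by
  refine limsup_le_limsup (Eventually.of_forall fun n => ?_) ?_ ?_
  · dsimp only
    gcongr
    exact_mod_cast h n
  · exact isCoboundedUnder_le_of_le atTop fun n => by positivity
  · exact isBoundedUnder_of ⟨1, cogrowthCount_rpow_div_le_one t⟩

theorem markedSpectralRadius_le_quotient_general {G H : Type*} [Group G] [Group H] (k : ℕ)
    (s : Fin k → G) (π : G →* H) :
    markedSpectralRadius s ≤ markedSpectralRadius (⇑π ∘ s) :=
  markedSpectralRadius_le_of_cogrowthCount_le (cogrowthCount_le_comp s π)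

/-- The spectral radius does not decrease when passing to a quotient marked group. -/
theorem markedSpectralRadius_le_quotient {G H : Type*} [Group G] [Group H] (k : ℕ) (hk : 0 < k)
    (s : Fin k → G) (π : G →* H) (hπ : Function.Surjective π) :
    markedSpectralRadius s ≤ markedSpectralRadius (⇑π ∘ s) :=
  markedSpectralRadius_le_quotient_general k s π
end

section
/- Let k be a positive natural number and let R_i (i ∈ ℕ) and R be normal subgroups of FreeGroup (Fin k) such that R_i converges to R in the Chabauty topology. Then limsup_{i → ∞} ρ(R_i) ≥ ρ(R): the spectral radius is semicontinuous along Chabauty limits of marked groups (property (∗∗) of Proposition 1.4 for the spectral radius). -/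
open Filter

/-- The letter map `ε : Fin k × Bool → FreeGroup (Fin k)` sending `(j, true)` to the
generator `of j` and `(j, false)` to its inverse. -/
def letterMap {k : ℕ} (p : Fin k × Bool) : FreeGroup (Fin k) :=
  if p.2 then FreeGroup.of p.1 else (FreeGroup.of p.1)⁻¹

/-- The cogrowth count of the marked group `F/R`, where `R` is a normal subgroup of the
free group `F = FreeGroup (Fin k)`: the number of words of length `n` in the generators
and their inverses whose product lies in `R`. -/
noncomputable def cogrowthCountSubgroup (k : ℕ) (R : Subgroup (FreeGroup (Fin k))) (n : ℕ) : ℕ :=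
  Nat.card {w : Fin n → Fin k × Bool | (List.ofFn (fun t => letterMap (w t))).prod ∈ R}

/-- The spectral radius of the marked group `F/R`:
`ρ(R) = limsup_{n → ∞} c_R(n)^(1/n) / (2k)`. -/
noncomputable def spectralRadiusSubgroup (k : ℕ) (R : Subgroup (FreeGroup (Fin k))) : ℝ :=
  Filter.atTop.limsup fun n : ℕ =>
    (cogrowthCountSubgroup k R n : ℝ) ^ ((1 : ℝ) / n) / (2 * k)

/-!
Words of length `n` with product in `R` can be concatenated, so the cogrowth count is
supermultiplicative: `c_R(n)^t ≤ c_R(tn)`. Hence every term `c_R(n)^(1/n) / 2k` with `n ≥ 1`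
is a lower bound for the spectral radius `ρ(R)`, not only for its limsup. Since `c_R(n)` only
depends on the elements of `R` of length at most `n`, Chabauty convergence `R_i → R` gives
`c_{R_i}(n) = c_R(n)` for large `i`, so each term for `R` is eventually below `ρ(R_i)`.
-/

section Supermultiplicative

variable {u : ℕ → ℕ}

lemma pow_succ_le_of_supermul (hu : ∀ m n, u m * u n ≤ u (m + n)) (n t : ℕ) :
    u n ^ (t + 1) ≤ u ((t + 1) * n) := by
  induction t with
  | zero => simp
  | succ t ih =>
    calc u n ^ (t + 2) = u n ^ (t + 1) * u n := pow_succ _ _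
      _ ≤ u ((t + 1) * n) * u n := Nat.mul_le_mul_right _ ih
      _ ≤ u ((t + 1) * n + n) := hu _ _
      _ = u ((t + 2) * n) := by ring_nf

lemma rpow_one_div_le_of_supermul (hu : ∀ m n, u m * u n ≤ u (m + n)) (n t : ℕ) :
    (u n : ℝ) ^ ((1 : ℝ) / n) ≤ (u ((t + 1) * n) : ℝ) ^ ((1 : ℝ) / ((t + 1) * n : ℕ)) := by
  have hpow : ((u n : ℝ) ^ (t + 1)) ≤ u ((t + 1) * n) := by
    exact_mod_cast pow_succ_le_of_supermul hu n t
  calc (u n : ℝ) ^ ((1 : ℝ) / n)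
      = ((u n : ℝ) ^ (t + 1)) ^ ((1 : ℝ) / ((t + 1) * n : ℕ)) := by
        rw [← Real.rpow_natCast, ← Real.rpow_mul (Nat.cast_nonneg _), mul_one_div]
        push_cast
        rw [div_mul_cancel_left₀ (by positivity), one_div]
    _ ≤ (u ((t + 1) * n) : ℝ) ^ ((1 : ℝ) / ((t + 1) * n : ℕ)) := by
        gcongr

end Supermultiplicative

lemma norm_letterMap_le {k : ℕ} (p : Fin k × Bool) : FreeGroup.norm (letterMap p) ≤ 1 := by
  rcases p with ⟨j, _ | _⟩ <;> simp [letterMap]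

lemma norm_prod_letterMap_le {k n : ℕ} (w : Fin n → Fin k × Bool) :
    FreeGroup.norm (List.ofFn fun t => letterMap (w t)).prod ≤ n := by
  induction n with
  | zero => simp
  | succ n ih =>
    rw [List.ofFn_succ, List.prod_cons]
    calc _ ≤ FreeGroup.norm (letterMap (w 0)) +
          FreeGroup.norm (List.ofFn fun t => letterMap (w t.succ)).prod :=
          FreeGroup.norm_mul_le _ _
      _ ≤ 1 + n := add_le_add (norm_letterMap_le _) (ih _)
      _ = n + 1 := add_comm _ _

lemma prod_letterMap_append {k m n : ℕ} (u : Fin m → Fin k × Bool) (v : Fin n → Fin k × Bool) :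
    (List.ofFn fun t => letterMap (Fin.append u v t)).prod =
      (List.ofFn fun t => letterMap (u t)).prod * (List.ofFn fun t => letterMap (v t)).prod := by
  simp only [← Function.comp_apply (f := letterMap), ← List.map_ofFn, List.ofFn_fin_append,
    List.map_append, List.prod_append]

section Cogrowth

variable (k : ℕ) (R : Subgroup (FreeGroup (Fin k)))

lemma cogrowthCountSubgroup_mul_le (m n : ℕ) :
    cogrowthCountSubgroup k R m * cogrowthCountSubgroup k R n ≤
      cogrowthCountSubgroup k R (m + n) := by
  set A := {w : Fin m → Fin k × Bool | (List.ofFn fun t => letterMap (w t)).prod ∈ R}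
  set B := {w : Fin n → Fin k × Bool | (List.ofFn fun t => letterMap (w t)).prod ∈ R}
  set C := {w : Fin (m + n) → Fin k × Bool | (List.ofFn fun t => letterMap (w t)).prod ∈ R}
  have happend (p : A × B) : Fin.append p.1.1 p.2.1 ∈ C := by
    simpa [C, prod_letterMap_append] using mul_mem p.1.2 p.2.2
  have hinj : Function.Injective fun p : A × B => (⟨_, happend p⟩ : C) := by
    intro p q hpq
    have h : Fin.appendEquiv m n (p.1.1, p.2.1) = Fin.appendEquiv m n (q.1.1, q.2.1) :=
      congrArg Subtype.val hpq
    simp only [EmbeddingLike.apply_eq_iff_eq, Prod.mk.injEq] at h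
    exact Prod.ext (Subtype.ext h.1) (Subtype.ext h.2)
  have hcard := Nat.card_le_card_of_injective _ hinj
  rwa [Nat.card_prod] at hcard

lemma cogrowthCountSubgroup_le_pow (n : ℕ) : cogrowthCountSubgroup k R n ≤ (2 * k) ^ n := by
  unfold cogrowthCountSubgroup
  exact (Nat.card_le_card_of_injective _ Subtype.val_injective).trans_eq (by simp [mul_comm])

variable {k R} in
lemma cogrowthCountSubgroup_congr {R' : Subgroup (FreeGroup (Fin k))} {n : ℕ}
    (h : ∀ w : FreeGroup (Fin k), FreeGroup.norm w ≤ n → (w ∈ R ↔ w ∈ R')) :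
    cogrowthCountSubgroup k R n = cogrowthCountSubgroup k R' n := by
  unfold cogrowthCountSubgroup
  congr 2
  ext w
  exact h _ (norm_prod_letterMap_le w)

noncomputable def spectralRadiusTerm (n : ℕ) : ℝ :=
  (cogrowthCountSubgroup k R n : ℝ) ^ ((1 : ℝ) / n) / (2 * k)

lemma spectralRadiusSubgroup_eq_limsup :
    spectralRadiusSubgroup k R = atTop.limsup (spectralRadiusTerm k R) := rfl

lemma spectralRadiusTerm_nonneg (n : ℕ) : 0 ≤ spectralRadiusTerm k R n := by
  unfold spectralRadiusTerm
  positivity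

lemma spectralRadiusTerm_le_one {n : ℕ} (hn : n ≠ 0) : spectralRadiusTerm k R n ≤ 1 := by
  refine div_le_one_of_le₀ ?_ (by positivity)
  calc (cogrowthCountSubgroup k R n : ℝ) ^ ((1 : ℝ) / n)
      ≤ (((2 * k) ^ n : ℕ) : ℝ) ^ ((1 : ℝ) / n) := by
        gcongr
        exact cogrowthCountSubgroup_le_pow k R n
    _ = 2 * k := by
        push_cast
        rw [← Real.rpow_natCast, ← Real.rpow_mul (by positivity), mul_one_div_cancel (by simpa),
          Real.rpow_one]

lemma isBoundedUnder_spectralRadiusTerm : IsBoundedUnder (· ≤ ·) atTop (spectralRadiusTerm k R) :=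
  isBoundedUnder_of_eventually_le <| (eventually_ne_atTop 0).mono
    fun _ hn => spectralRadiusTerm_le_one k R hn

lemma spectralRadiusSubgroup_le_one : spectralRadiusSubgroup k R ≤ 1 :=
  limsup_le_of_le (isCoboundedUnder_le_of_le atTop (spectralRadiusTerm_nonneg k R))
    ((eventually_ne_atTop 0).mono fun _ hn => spectralRadiusTerm_le_one k R hn)

lemma spectralRadiusTerm_le_spectralRadiusSubgroup {n : ℕ} (hn : n ≠ 0) :
    spectralRadiusTerm k R n ≤ spectralRadiusSubgroup k R := by
  refine le_limsup_of_frequently_le ?_ (isBoundedUnder_spectralRadiusTerm k R)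
  refine frequently_atTop.2 fun m => ⟨(m + 1) * n, ?_, ?_⟩
  · nlinarith [Nat.one_le_iff_ne_zero.2 hn]
  · unfold spectralRadiusTerm
    gcongr
    exact rpow_one_div_le_of_supermul (cogrowthCountSubgroup_mul_le k R) n m

end Cogrowth

theorem spectralRadius_semicontinuous_general (k : ℕ)
    (R : ℕ → Subgroup (FreeGroup (Fin k))) (Rlim : Subgroup (FreeGroup (Fin k)))
    (hconv : ∀ n : ℕ, ∃ N : ℕ, ∀ i ≥ N, ∀ w : FreeGroup (Fin k),
      (FreeGroup.toWord w).length ≤ n → (w ∈ R i ↔ w ∈ Rlim)) :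
    spectralRadiusSubgroup k Rlim ≤
      Filter.atTop.limsup fun i => spectralRadiusSubgroup k (R i) := by
  rw [spectralRadiusSubgroup_eq_limsup]
  refine limsup_le_of_le (isCoboundedUnder_le_of_le atTop (spectralRadiusTerm_nonneg k Rlim)) ?_
  filter_upwards [eventually_ne_atTop 0] with n hn
  obtain ⟨N, hN⟩ := hconv n
  have hterm : ∀ᶠ i in atTop, spectralRadiusTerm k Rlim n ≤ spectralRadiusSubgroup k (R i) := by
    filter_upwards [eventually_ge_atTop N] with i hi
    rw [spectralRadiusTerm, ← cogrowthCountSubgroup_congr (hN i hi)]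
    exact spectralRadiusTerm_le_spectralRadiusSubgroup k (R i) hn
  exact le_limsup_of_frequently_le hterm.frequently
    (isBoundedUnder_of ⟨1, fun i => spectralRadiusSubgroup_le_one k (R i)⟩)

/-- The spectral radius is semicontinuous along Chabauty limits of marked groups:
if normal subgroups `R i` of the free group converge to `R` in the Chabauty topology,
then `limsup_i ρ(R i) ≥ ρ(R)`. -/
theorem spectralRadius_semicontinuous (k : ℕ) (hk : 0 < k)
    (R : ℕ → Subgroup (FreeGroup (Fin k))) (Rlim : Subgroup (FreeGroup (Fin k)))
    (hnormal : ∀ i, (R i).Normal) (hnormallim : Rlim.Normal)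
    (hconv : ∀ n : ℕ, ∃ N : ℕ, ∀ i ≥ N, ∀ w : FreeGroup (Fin k),
      (FreeGroup.toWord w).length ≤ n → (w ∈ R i ↔ w ∈ Rlim)) :
    spectralRadiusSubgroup k Rlim ≤
      Filter.atTop.limsup fun i => spectralRadiusSubgroup k (R i) :=
  spectralRadius_semicontinuous_general k R Rlim hconv
end

section
/- Let G be a group, k a positive natural number, and s : Fin k → G. Then for all natural numbers m and n, the Shannon entropies of the random walk distributions satisfy H(m + n) ≤ H(m) + H(n): the entropy sequence of the simple random walk on a marked group is subadditive. -/
/-!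
Run independent walks `X` and `Y` of lengths `m` and `n`; the walk of length `m + n` is then
distributed as the product `X * Y`, the image of the pair `(X, Y)` under multiplication. So
`H(m + n) = H(X * Y) ≤ H(X, Y) = H(X) + H(Y)`: pushing a finite distribution forward can only
lower its entropy, since `negMulLog` is subadditive on `[0, ∞)` (`log` is monotone), and the
entropy of an independent pair is the sum of the entropies.
-/

/-- The `n`-step distribution of the simple random walk on the marked group `(G, s)`. -/
noncomputable def rwDist {G : Type*} [Group G] {k : ℕ} (s : Fin k → G) (n : ℕ) (g : G) : ℝ :=
  (Nat.card {w : Fin n → Fin k | (List.ofFn (fun i => s (w i))).prod = g} : ℝ) / k ^ n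

/-- The Shannon entropy of the `n`-step distribution of the simple random walk
on the marked group `(G, s)`. -/
noncomputable def rwEntropy {G : Type*} [Group G] {k : ℕ} (s : Fin k → G) (n : ℕ) : ℝ :=
  ∑' g : G, Real.negMulLog (rwDist s n g)

open Finset Real

lemma mul_log_le_mul_log {x y : ℝ} (hx : 0 ≤ x) (hxy : x ≤ y) : x * log x ≤ x * log y := by
  rcases hx.eq_or_lt with rfl | hx
  · simp
  · exact mul_le_mul_of_nonneg_left (log_le_log hx hxy) hx.le

lemma negMulLog_sum_le {ι : Type*} (s : Finset ι) {x : ι → ℝ} (hx : ∀ i ∈ s, 0 ≤ x i) :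
    negMulLog (∑ i ∈ s, x i) ≤ ∑ i ∈ s, negMulLog (x i) := by
  calc negMulLog (∑ i ∈ s, x i) = ∑ i ∈ s, -(x i * log (∑ j ∈ s, x j)) := by
        rw [negMulLog, neg_mul, sum_mul, sum_neg_distrib]
    _ ≤ ∑ i ∈ s, -(x i * log (x i)) := sum_le_sum fun i hi =>
        neg_le_neg (mul_log_le_mul_log (hx i hi) (single_le_sum hx hi))
    _ = ∑ i ∈ s, negMulLog (x i) := by simp only [negMulLog, neg_mul]

noncomputable def unifPushforward {α β : Type*} (f : α → β) (b : β) : ℝ :=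
  Nat.card {a | f a = b} / Nat.card α

noncomputable def unifPushforwardEntropy {α β : Type*} (f : α → β) : ℝ :=
  ∑' b, negMulLog (unifPushforward f b)

section unifPushforward

variable {α α' β γ : Type*}

lemma unifPushforward_comp_equiv (f : α → β) (e : α' ≃ α) :
    unifPushforward (f ∘ e) = unifPushforward f := by
  ext b
  rw [unifPushforward, unifPushforward, Nat.card_congr e]
  congr 2
  exact Nat.card_congr (e.subtypeEquiv fun _ => Iff.rfl)

lemma unifPushforwardEntropy_comp_equiv (f : α → β) (e : α' ≃ α) :
    unifPushforwardEntropy (f ∘ e) = unifPushforwardEntropy f := by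
  rw [unifPushforwardEntropy, unifPushforward_comp_equiv, unifPushforwardEntropy]

lemma unifPushforward_nonneg (f : α → β) (b : β) : 0 ≤ unifPushforward f b := by
  unfold unifPushforward; positivity

lemma unifPushforward_eq_zero_of_notMem_range (f : α → β) {b : β} (hb : b ∉ Set.range f) :
    unifPushforward f b = 0 := by
  have : {a | f a = b} = ∅ := Set.eq_empty_of_forall_notMem fun a ha => hb ⟨a, ha⟩
  simp [unifPushforward, this]

variable [Fintype α] [DecidableEq β] (f : α → β)

lemma unifPushforward_eq_card_filter (b : β) :
    unifPushforward f b = #{a | f a = b} / Fintype.card α := by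
  simp [unifPushforward, Nat.card_eq_fintype_card, Fintype.card_subtype]

lemma unifPushforwardEntropy_eq_sum :
    unifPushforwardEntropy f = ∑ b ∈ univ.image f, negMulLog (unifPushforward f b) := by
  refine tsum_eq_sum fun b hb => ?_
  rw [unifPushforward_eq_zero_of_notMem_range f (by simpa using hb), negMulLog_zero]

lemma sum_unifPushforward [Nonempty α] : ∑ b ∈ univ.image f, unifPushforward f b = 1 := by
  simp only [unifPushforward_eq_card_filter, ← sum_div]
  rw [div_eq_one_iff_eq (by positivity), ← Nat.cast_sum, ← card_eq_sum_card_image, card_univ]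

lemma unifPushforward_comp [DecidableEq γ] (g : β → γ) (c : γ) :
    unifPushforward (g ∘ f) c = ∑ b ∈ univ.image f with g b = c, unifPushforward f b := by
  simp only [unifPushforward_eq_card_filter, ← sum_div]
  rw [card_eq_sum_card_fiberwise (f := f) (t := {b ∈ univ.image f | g b = c})]
  · push_cast
    congr 1
    refine sum_congr rfl fun b hb => ?_
    rw [mem_filter] at hb
    congr 2
    ext a
    simp +contextual [← hb.2]
  · intro a ha
    simp_all

lemma unifPushforwardEntropy_comp_le [DecidableEq γ] (g : β → γ) :
    unifPushforwardEntropy (g ∘ f) ≤ unifPushforwardEntropy f := by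
  rw [unifPushforwardEntropy_eq_sum, unifPushforwardEntropy_eq_sum]
  calc ∑ c ∈ univ.image (g ∘ f), negMulLog (unifPushforward (g ∘ f) c)
      ≤ ∑ c ∈ univ.image (g ∘ f), ∑ b ∈ univ.image f with g b = c,
          negMulLog (unifPushforward f b) := by
        refine sum_le_sum fun c _ => ?_
        rw [unifPushforward_comp]
        exact negMulLog_sum_le _ fun b _ => unifPushforward_nonneg f b
    _ = ∑ b ∈ univ.image f, negMulLog (unifPushforward f b) := by
        refine sum_fiberwise_of_maps_to (fun b hb => ?_) _
        obtain ⟨a, -, rfl⟩ := mem_image.mp hb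
        exact mem_image_of_mem _ (mem_univ a)

end unifPushforward

section prodMap

variable {α₁ α₂ β₁ β₂ : Type*} [Fintype α₁] [Fintype α₂] (f₁ : α₁ → β₁) (f₂ : α₂ → β₂)

lemma unifPushforward_prodMap (b : β₁ × β₂) :
    unifPushforward (Prod.map f₁ f₂) b = unifPushforward f₁ b.1 * unifPushforward f₂ b.2 := by
  classical
  simp only [unifPushforward_eq_card_filter, Fintype.card_prod, Prod.ext_iff, Prod.map_fst,
    Prod.map_snd]
  rw [← univ_product_univ, filter_product (fun a => f₁ a = b.1) (fun a => f₂ a = b.2), card_product]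
  push_cast
  ring

lemma unifPushforwardEntropy_prodMap [Nonempty α₁] [Nonempty α₂] :
    unifPushforwardEntropy (Prod.map f₁ f₂) =
      unifPushforwardEntropy f₁ + unifPushforwardEntropy f₂ := by
  classical
  simp only [unifPushforwardEntropy_eq_sum, ← univ_product_univ, prodMap_image_product,
    sum_product, unifPushforward_prodMap, negMulLog_mul, sum_add_distrib, ← mul_sum, ← sum_mul,
    sum_unifPushforward, one_mul]

end prodMap

section randomWalk

variable {G : Type*} {k : ℕ} (s : Fin k → G)

def wordProd [Monoid G] (n : ℕ) (w : Fin n → Fin k) : G := (List.ofFn fun i => s (w i)).prod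

lemma wordProd_comp_appendEquiv [Monoid G] (m n : ℕ) :
    wordProd s (m + n) ∘ Fin.appendEquiv m n =
      (fun p : G × G => p.1 * p.2) ∘ Prod.map (wordProd s m) (wordProd s n) := by
  ext ⟨u, v⟩
  simp [wordProd, List.ofFn_add]

variable [Group G]

lemma rwDist_eq_unifPushforward (n : ℕ) : rwDist s n = unifPushforward (wordProd s n) := by
  ext g
  simp [rwDist, unifPushforward, wordProd]

lemma rwEntropy_eq_unifPushforwardEntropy (n : ℕ) :
    rwEntropy s n = unifPushforwardEntropy (wordProd s n) := by
  rw [rwEntropy, rwDist_eq_unifPushforward, unifPushforwardEntropy]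

end randomWalk

/-- The entropy sequence of the simple random walk on a marked group is subadditive:
`H(m + n) ≤ H(m) + H(n)`. -/
theorem rwEntropy_subadditive {G : Type*} [Group G] (k : ℕ) (hk : 0 < k)
    (s : Fin k → G) (m n : ℕ) :
    rwEntropy s (m + n) ≤ rwEntropy s m + rwEntropy s n := by
  classical
  have : Nonempty (Fin k) := ⟨⟨0, hk⟩⟩
  simp only [rwEntropy_eq_unifPushforwardEntropy]
  calc unifPushforwardEntropy (wordProd s (m + n))
      = unifPushforwardEntropy ((fun p : G × G => p.1 * p.2) ∘
          Prod.map (wordProd s m) (wordProd s n)) := by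
        rw [← wordProd_comp_appendEquiv, unifPushforwardEntropy_comp_equiv]
    _ ≤ unifPushforwardEntropy (Prod.map (wordProd s m) (wordProd s n)) :=
        unifPushforwardEntropy_comp_le _ _
    _ = unifPushforwardEntropy (wordProd s m) + unifPushforwardEntropy (wordProd s n) :=
        unifPushforwardEntropy_prodMap _ _
end

section
/- Let G be a group, k a positive natural number, and s : Fin k → G with symmetric image (for every i there is j with s j = (s i)⁻¹). If π : G →* H is a surjective group homomorphism, then φ(H, π ∘ s) ≤ φ(G, s): the Cheeger (isoperimetric) constant of a quotient marked group is at most that of the group (property (∗) of Proposition 6.1 for the Cheeger constant). -/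
/-- The edge boundary count of a finite set `X` in the Cayley graph of the marked
group `(G, s)`. -/
noncomputable def edgeBoundaryCount {G : Type*} [Group G] {k : ℕ} (s : Fin k → G)
    (X : Finset G) : ℕ :=
  Nat.card {p : G × Fin k | p.1 ∈ X ∧ p.1 * s p.2 ∉ X}

/-- The Cheeger (isoperimetric) constant of the marked group `(G, s)`. -/
noncomputable def cheegerConstant {G : Type*} [Group G] {k : ℕ} (s : Fin k → G) : ℝ :=
  sInf {r : ℝ | ∃ X : Finset G, X.Nonempty ∧
    r = (edgeBoundaryCount s X : ℝ) / (k * X.card)}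

/-!
Push a finite set `X ⊆ G` forward to the multiplicity function `f h = #(X ∩ π⁻¹ h)` on `H`.
Each edge `(h, h * π sᵢ)` of the quotient Cayley graph along which `f` drops by `d` is the image
of at least `d` boundary edges of `X`, so the variation `∑ᵢ ∑ₕ (f h - f (h * π sᵢ))` is at most
`∂X`. By the coarea formula this variation is the sum of the boundaries of the superlevel sets
`{f ≥ t}`, whose sizes add up to `#X`; hence one of them has boundary ratio at most that of `X`.
-/

open Finset

section EdgeBoundary

variable {G : Type*} [Group G] {k : ℕ}

lemma edgeBoundaryCount_eq_sum_card [DecidableEq G] (s : Fin k → G) (X : Finset G) :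
    edgeBoundaryCount s X = ∑ i, #{g ∈ X | g * s i ∉ X} := by
  have hset : {p : G × Fin k | p.1 ∈ X ∧ p.1 * s p.2 ∉ X}
      = ↑{p ∈ X ×ˢ (univ : Finset (Fin k)) | p.1 * s p.2 ∉ X} := by
    ext p
    simp
  rw [edgeBoundaryCount, hset, Nat.card_coe_set_eq, Set.ncard_coe_finset, card_filter,
    sum_product_right]
  simp only [card_filter]

lemma cheegerConstant_le_of_forall_exists {H : Type*} [Group H] {s : Fin k → G}
    {t : Fin k → H}
    (h : ∀ X : Finset G, X.Nonempty → ∃ Y : Finset H, Y.Nonempty ∧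
      edgeBoundaryCount t Y * #X ≤ edgeBoundaryCount s X * #Y) :
    cheegerConstant t ≤ cheegerConstant s := by
  rw [cheegerConstant, cheegerConstant]
  refine le_csInf ?_ ?_
  · exact ⟨_, {1}, singleton_nonempty 1, rfl⟩
  rintro _ ⟨X, hX, rfl⟩
  obtain ⟨Y, hY, hle⟩ := h X hX
  have hratio : (edgeBoundaryCount t Y : ℝ) / (k * #Y) ≤ edgeBoundaryCount s X / (k * #X) := by
    rw [mul_comm (k : ℝ), mul_comm (k : ℝ), ← div_div, ← div_div]
    refine div_le_div_of_nonneg_right ?_ k.cast_nonneg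
    rw [div_le_div_iff₀ (by exact_mod_cast hY.card_pos) (by exact_mod_cast hX.card_pos)]
    exact_mod_cast hle
  refine le_trans (csInf_le ?_ ⟨Y, hY, rfl⟩) hratio
  refine ⟨0, ?_⟩
  rintro _ ⟨Z, -, rfl⟩
  positivity

end EdgeBoundary

namespace Finsupp

variable {H : Type*}

def superlevelSet (f : H →₀ ℕ) (t : ℕ) : Finset H := {h ∈ f.support | t ≤ f h}

lemma mem_superlevelSet {f : H →₀ ℕ} {t : ℕ} (ht : 0 < t) {h : H} :
    h ∈ f.superlevelSet t ↔ t ≤ f h := by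
  simp only [superlevelSet, mem_filter, mem_support_iff]
  omega

lemma superlevelSet_nonempty {f : H →₀ ℕ} {t : ℕ} (ht : 0 < t)
    (htM : t ≤ f.support.sup f) : (f.superlevelSet t).Nonempty := by
  obtain ⟨h, -, hh⟩ := (Finset.le_sup_iff ht).1 htM
  exact ⟨h, (mem_superlevelSet ht).2 hh⟩

lemma sum_card_superlevelSet (f : H →₀ ℕ) {M : ℕ} (hM : ∀ h ∈ f.support, f h ≤ M) :
    ∑ t ∈ Icc 1 M, #(f.superlevelSet t) = ∑ h ∈ f.support, f h := by
  simp only [superlevelSet, card_filter]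
  rw [Finset.sum_comm]
  refine Finset.sum_congr rfl fun h hh => ?_
  rw [← card_filter]
  have hIcc : {t ∈ Icc 1 M | t ≤ f h} = Icc 1 (f h) := by
    ext t
    have := hM h hh
    simp only [mem_filter, mem_Icc]
    omega
  rw [hIcc, Nat.card_Icc, Nat.add_sub_cancel]

variable [Group H] {k : ℕ}

/-- For the indicator function of `Y` this is `edgeBoundaryCount s Y`. -/
def edgeVariation (s : Fin k → H) (f : H →₀ ℕ) : ℕ :=
  ∑ i, ∑ h ∈ f.support, (f h - f (h * s i))

variable [DecidableEq H]

theorem sum_edgeBoundaryCount_superlevelSet (s : Fin k → H) (f : H →₀ ℕ) {M : ℕ}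
    (hM : ∀ h ∈ f.support, f h ≤ M) :
    ∑ t ∈ Icc 1 M, edgeBoundaryCount s (f.superlevelSet t) = edgeVariation s f := by
  have hlevel : ∀ t ∈ Icc 1 M, ∀ i, #{h ∈ f.superlevelSet t | h * s i ∉ f.superlevelSet t}
      = ∑ h ∈ f.support, if t ≤ f h ∧ f (h * s i) < t then 1 else 0 := by
    intro t ht i
    have ht : 0 < t := (mem_Icc.1 ht).1
    rw [← card_filter, superlevelSet, filter_filter]
    congr 1
    refine filter_congr fun h _ => ?_
    rw [← superlevelSet, mem_superlevelSet ht]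
    omega
  calc ∑ t ∈ Icc 1 M, edgeBoundaryCount s (f.superlevelSet t)
      = ∑ t ∈ Icc 1 M, ∑ i, ∑ h ∈ f.support,
          if t ≤ f h ∧ f (h * s i) < t then 1 else 0 := by
        refine Finset.sum_congr rfl fun t ht => ?_
        rw [edgeBoundaryCount_eq_sum_card]
        exact Finset.sum_congr rfl fun i _ => hlevel t ht i
    _ = ∑ i, ∑ h ∈ f.support, ∑ t ∈ Icc 1 M,
          if t ≤ f h ∧ f (h * s i) < t then 1 else 0 := by
        rw [Finset.sum_comm]
        exact Finset.sum_congr rfl fun i _ => Finset.sum_comm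
    _ = edgeVariation s f := by
        refine Finset.sum_congr rfl fun i _ => Finset.sum_congr rfl fun h hh => ?_
        rw [← card_filter]
        have hIoc : {t ∈ Icc 1 M | t ≤ f h ∧ f (h * s i) < t} = Ioc (f (h * s i)) (f h) := by
          ext t
          have := hM h hh
          simp only [mem_filter, mem_Icc, mem_Ioc]
          omega
        rw [hIoc, Nat.card_Ioc]

theorem exists_superlevelSet_edgeBoundaryCount_mul_le (s : Fin k → H) {f : H →₀ ℕ}
    (hf : f ≠ 0) :
    ∃ t, (f.superlevelSet t).Nonempty ∧
      edgeBoundaryCount s (f.superlevelSet t) * ∑ h ∈ f.support, f h ≤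
        edgeVariation s f * #(f.superlevelSet t) := by
  set M := f.support.sup f
  have hM : ∀ h ∈ f.support, f h ≤ M := fun h hh => le_sup hh
  obtain ⟨h₀, hh₀⟩ := support_nonempty_iff.2 hf
  have hM₀ : 1 ≤ M := (Nat.one_le_iff_ne_zero.2 (mem_support_iff.1 hh₀)).trans (hM h₀ hh₀)
  have hsum : ∑ t ∈ Icc 1 M, edgeBoundaryCount s (f.superlevelSet t) * ∑ h ∈ f.support, f h
      ≤ ∑ t ∈ Icc 1 M, edgeVariation s f * #(f.superlevelSet t) := by
    rw [← Finset.sum_mul, ← Finset.mul_sum, sum_edgeBoundaryCount_superlevelSet s f hM,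
      sum_card_superlevelSet f hM]
  obtain ⟨t, ht, hle⟩ := exists_le_of_sum_le ⟨1, mem_Icc.2 ⟨le_rfl, hM₀⟩⟩ hsum
  obtain ⟨ht₁, htM⟩ := mem_Icc.1 ht
  exact ⟨t, superlevelSet_nonempty ht₁ htM, hle⟩

end Finsupp

section Quotient

variable {G H : Type*} [Group G] [Group H] [DecidableEq H] {k : ℕ}

lemma card_fiber_sub_card_fiber_le [DecidableEq G] (π : G →* H) (X : Finset G) (h : H)
    (g₀ : G) :
    #{g ∈ X | π g = h} - #{g ∈ X | π g = h * π g₀} ≤ #{g ∈ X | π g = h ∧ g * g₀ ∉ X} := by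
  have hsplit : #{g ∈ X | π g = h ∧ g * g₀ ∈ X} + #{g ∈ X | π g = h ∧ g * g₀ ∉ X}
      = #{g ∈ X | π g = h} := by
    rw [← filter_filter, ← filter_filter]
    exact card_filter_add_card_filter_not _
  have hmaps : #{g ∈ X | π g = h ∧ g * g₀ ∈ X} ≤ #{g ∈ X | π g = h * π g₀} := by
    refine card_le_card_of_injOn (· * g₀) (fun g hg => ?_)
      fun a _ b _ hab => mul_right_cancel hab
    simp only [coe_filter, Set.mem_ofPred_eq] at hg ⊢
    exact ⟨hg.2.2, by rw [map_mul, hg.2.1]⟩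
  omega

lemma edgeVariation_toFinsupp_map_le (π : G →* H) (s : Fin k → G) (X : Finset G) :
    (X.val.map π).toFinsupp.edgeVariation (⇑π ∘ s) ≤ edgeBoundaryCount s X := by
  classical
  rw [edgeBoundaryCount_eq_sum_card]
  refine sum_le_sum fun i _ => ?_
  have hsupport : (X.val.map π).toFinsupp.support = X.image π := rfl
  have hcount : ∀ h, (X.val.map π).toFinsupp h = #{g ∈ X | π g = h} := by
    intro h
    rw [Multiset.toFinsupp_apply, Multiset.count_map]
    simp only [eq_comm]
    rfl
  calc ∑ h ∈ (X.val.map π).toFinsupp.support,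
        ((X.val.map π).toFinsupp h - (X.val.map π).toFinsupp (h * (⇑π ∘ s) i))
      ≤ ∑ h ∈ X.image π, #{g ∈ {g ∈ X | g * s i ∉ X} | π g = h} := by
        rw [hsupport]
        refine sum_le_sum fun h _ => ?_
        rw [hcount, hcount, filter_filter]
        simpa only [and_comm, Function.comp_apply] using card_fiber_sub_card_fiber_le π X h (s i)
    _ = #{g ∈ X | g * s i ∉ X} :=
        (card_eq_sum_card_fiberwise fun g hg => mem_image_of_mem π (mem_filter.1 hg).1).symm

end Quotient

theorem cheegerConstant_quotient_le_general {G H : Type*} [Group G] [Group H] (k : ℕ)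
    (s : Fin k → G) (π : G →* H) :
    cheegerConstant (⇑π ∘ s) ≤ cheegerConstant s := by
  classical
  refine cheegerConstant_le_of_forall_exists fun X hX => ?_
  set f := (X.val.map π).toFinsupp
  have hmass : ∑ h ∈ f.support, f h = #X :=
    (Multiset.toFinsupp_sum_eq _).trans (Multiset.card_map _ _)
  have hf : f ≠ 0 := by
    rw [← Finsupp.support_nonempty_iff, Multiset.toFinsupp_support]
    simpa [Finset.nonempty_iff_ne_empty] using hX
  obtain ⟨t, ht, hle⟩ := f.exists_superlevelSet_edgeBoundaryCount_mul_le (⇑π ∘ s) hf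
  refine ⟨_, ht, ?_⟩
  calc edgeBoundaryCount (⇑π ∘ s) (f.superlevelSet t) * #X
      ≤ f.edgeVariation (⇑π ∘ s) * #(f.superlevelSet t) := hmass ▸ hle
    _ ≤ edgeBoundaryCount s X * #(f.superlevelSet t) := by
      gcongr
      exact edgeVariation_toFinsupp_map_le π s X

/-- The Cheeger constant of a quotient marked group is at most that of the group. -/
theorem cheegerConstant_quotient_le {G H : Type*} [Group G] [Group H] (k : ℕ) (hk : 0 < k)
    (s : Fin k → G) (hsym : ∀ i : Fin k, ∃ j : Fin k, s j = (s i)⁻¹)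
    (π : G →* H) (hπ : Function.Surjective π) :
    cheegerConstant (⇑π ∘ s) ≤ cheegerConstant s :=
  cheegerConstant_quotient_le_general k s π
end

section
/- Let G be a group, k a positive natural number, s : Fin k → G, and let π : G →* H be a surjective group homomorphism. Then for every n, the ball B_H(n) in (H, π ∘ s) equals the image π(B_G(n)) of the ball in (G, s); hence Nat.card (B_H(n)) ≤ Nat.card (B_G(n)) for all n, and consequently limsup_{n → ∞} (Real.log (Nat.card (B_H(n))))/n ≤ limsup_{n → ∞} (Real.log (Nat.card (B_G(n))))/n: the rate of exponential growth of a quotient marked group is at most that of the group (property (∗) of Proposition 6.7 for the rate of exponential growth). -/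
open Filter

/-- The ball of radius `n` in the marked group `(G, s)`: all elements expressible as a
product of at most `n` generators. -/
def markedBall {G : Type*} [Group G] {k : ℕ} (s : Fin k → G) (n : ℕ) : Set G :=
  {g : G | ∃ m ≤ n, ∃ w : Fin m → Fin k, (List.ofFn (fun i => s (w i))).prod = g}

lemma markedBall_subset_range {G : Type*} [Group G] {k : ℕ} (s : Fin k → G) (n : ℕ) :
    markedBall s n ⊆ Set.range (fun p : (Σ m : Fin (n+1), Fin (m : ℕ) → Fin k) =>
      (List.ofFn (fun i => s (p.2 i))).prod) := by
  rintro g ⟨m, hm, w, rfl⟩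
  exact ⟨⟨⟨m, Nat.lt_succ_of_le hm⟩, w⟩, rfl⟩

lemma markedBall_finite {G : Type*} [Group G] {k : ℕ} (s : Fin k → G) (n : ℕ) :
    (markedBall s n).Finite :=
  (Set.finite_range _).subset (markedBall_subset_range s n)

lemma one_mem_markedBall {G : Type*} [Group G] {k : ℕ} (s : Fin k → G) (n : ℕ) :
    (1 : G) ∈ markedBall s n :=
  ⟨0, Nat.zero_le n, Fin.elim0, by simp⟩

lemma one_le_card_markedBall {G : Type*} [Group G] {k : ℕ} (s : Fin k → G) (n : ℕ) :
    1 ≤ Nat.card (markedBall s n) := by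
  haveI := (markedBall_finite s n).to_subtype
  haveI : Nonempty (markedBall s n) := ⟨⟨1, one_mem_markedBall s n⟩⟩
  exact Nat.one_le_iff_ne_zero.mpr Nat.card_pos.ne'

lemma geom_sum_le_pow (k n : ℕ) : ∑ m ∈ Finset.range (n+1), k ^ m ≤ (k+1) ^ n := by
  induction n with
  | zero => simp
  | succ n ih =>
      rw [Finset.sum_range_succ, pow_succ]
      have h1 : k ^ (n+1) ≤ (k+1) ^ n * k := by
        rw [pow_succ]
        exact Nat.mul_le_mul_right k (Nat.pow_le_pow_left (Nat.le_succ k) n)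
      calc ∑ m ∈ Finset.range (n+1), k ^ m + k ^ (n+1)
          ≤ (k+1) ^ n + (k+1) ^ n * k := Nat.add_le_add ih h1
        _ = (k+1) ^ n * (k+1) := by ring

lemma card_markedBall_le {G : Type*} [Group G] {k : ℕ} (s : Fin k → G) (n : ℕ) :
    Nat.card (markedBall s n) ≤ (k+1) ^ n := by
  have h1 : Nat.card (markedBall s n) ≤
      Nat.card (Set.range (fun p : (Σ m : Fin (n+1), Fin (m : ℕ) → Fin k) =>
        (List.ofFn (fun i => s (p.2 i))).prod)) := by
    rw [Nat.card_coe_set_eq, Nat.card_coe_set_eq]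
    exact Set.ncard_le_ncard (markedBall_subset_range s n) (Set.finite_range _)
  have h2 : Nat.card (Set.range (fun p : (Σ m : Fin (n+1), Fin (m : ℕ) → Fin k) =>
      (List.ofFn (fun i => s (p.2 i))).prod)) ≤
      Nat.card (Σ m : Fin (n+1), Fin (m : ℕ) → Fin k) :=
    Finite.card_range_le _
  have h3 : Nat.card (Σ m : Fin (n+1), Fin (m : ℕ) → Fin k) = ∑ m ∈ Finset.range (n+1), k ^ m := by
    rw [Nat.card_eq_fintype_card, Fintype.card_sigma]
    rw [Fin.sum_univ_eq_sum_range (fun m => Fintype.card (Fin m → Fin k))]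
    simp
  exact h1.trans (h2.trans (h3.le.trans (geom_sum_le_pow k n)))

/-- The ball in a quotient marked group is the image of the ball, hence its cardinality
is at most that of the ball in the group, and consequently the rate of exponential
growth of a quotient marked group is at most that of the group. -/
theorem growth_rate_quotient_le {G H : Type*} [Group G] [Group H] (k : ℕ) (hk : 0 < k)
    (s : Fin k → G) (π : G →* H) (hπ : Function.Surjective π) :
    (∀ n : ℕ, markedBall (⇑π ∘ s) n = ⇑π '' markedBall s n) ∧
    (∀ n : ℕ, Nat.card (markedBall (⇑π ∘ s) n) ≤ Nat.card (markedBall s n)) ∧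
    (Filter.atTop.limsup fun n : ℕ =>
        Real.log (Nat.card (markedBall (⇑π ∘ s) n)) / n) ≤
      Filter.atTop.limsup fun n : ℕ =>
        Real.log (Nat.card (markedBall s n)) / n := by
  have himg : ∀ n : ℕ, markedBall (⇑π ∘ s) n = ⇑π '' markedBall s n := by
    intro n
    ext h
    constructor
    · rintro ⟨m, hm, w, rfl⟩
      refine ⟨(List.ofFn (fun i => s (w i))).prod, ⟨m, hm, w, rfl⟩, ?_⟩
      rw [map_list_prod]
      simp [Function.comp_def]
    · rintro ⟨g, ⟨m, hm, w, rfl⟩, rfl⟩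
      refine ⟨m, hm, w, ?_⟩
      rw [map_list_prod]
      simp [Function.comp_def]
  have hcard : ∀ n : ℕ, Nat.card (markedBall (⇑π ∘ s) n) ≤ Nat.card (markedBall s n) := by
    intro n
    rw [himg n]
    exact Nat.card_image_le (markedBall_finite s n)
  refine ⟨himg, hcard, ?_⟩
  have hposG : ∀ n : ℕ, (1 : ℝ) ≤ (Nat.card (markedBall s n) : ℝ) := fun n => by
    exact_mod_cast one_le_card_markedBall s n
  have hposH : ∀ n : ℕ, (1 : ℝ) ≤ (Nat.card (markedBall (⇑π ∘ s) n) : ℝ) := fun n => by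
    exact_mod_cast one_le_card_markedBall (⇑π ∘ s) n
  have hf0 : ∀ n : ℕ, 0 ≤ Real.log (Nat.card (markedBall (⇑π ∘ s) n)) / n := by
    intro n
    apply div_nonneg (Real.log_nonneg (hposH n)) (Nat.cast_nonneg n)
  have hle : ∀ n : ℕ, Real.log (Nat.card (markedBall (⇑π ∘ s) n)) / n ≤
      Real.log (Nat.card (markedBall s n)) / n := by
    intro n
    rcases Nat.eq_zero_or_pos n with rfl | hn
    · simp
    · apply div_le_div_of_nonneg_right ?_ (Nat.cast_nonneg n)
      exact Real.log_le_log (by linarith [hposH n]) (by exact_mod_cast hcard n)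
  have hbdd : ∀ n : ℕ, Real.log (Nat.card (markedBall s n)) / n ≤ Real.log (k+1) := by
    intro n
    have hk1 : (1 : ℝ) ≤ (k : ℝ) + 1 := by have := Nat.cast_nonneg (α := ℝ) k; linarith
    rcases Nat.eq_zero_or_pos n with rfl | hn
    · simpa using Real.log_nonneg hk1
    · have h1 : Real.log (Nat.card (markedBall s n)) ≤ Real.log ((k+1 : ℝ) ^ n) := by
        apply Real.log_le_log (by linarith [hposG n])
        calc ((Nat.card (markedBall s n) : ℝ)) ≤ ((k+1) ^ n : ℕ) := by
              exact_mod_cast card_markedBall_le s n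
          _ = (k+1 : ℝ) ^ n := by push_cast; ring
      rw [Real.log_pow] at h1
      rw [div_le_iff₀ (by exact_mod_cast hn : (0:ℝ) < n)]
      calc Real.log (Nat.card (markedBall s n)) ≤ n * Real.log (k+1) := by
            exact_mod_cast h1
        _ = Real.log (k+1) * n := by ring
  exact Filter.limsup_le_limsup (Filter.Eventually.of_forall hle)
    (Filter.isCoboundedUnder_le_of_le Filter.atTop hf0)
    (Filter.isBoundedUnder_of ⟨Real.log (k+1), hbdd⟩)
end

section
/- In PSL₂(ℤ[1/2]), the subgroup generated by the images of the two matrices c = [[0, 1], [-1, 0]] and t = [[1, -1/4], [0, 1]] is the whole group: the Subgroup.closure of the set consisting of these two elements equals ⊤. -/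
/-!
Let `K` be the subgroup of `SL₂(ℤ[1/2])` generated by `c` and `t`. Powers of `t` give the
unipotents `[[1, m/4], [0, 1]]`; together with `c` they produce `diag(1/2, 2)`, and conjugation by
it divides the upper right entry by `4`, so `K` contains every `[[1, x], [0, 1]]`. Every element of
`ℤ[1/2]` is a unit times an integer, which makes `ℤ[1/2]` Euclidean for the least absolute value
of such an integer. Left multiplication by `c * [[1, x], [0, 1]]` turns the first column `(a, γ)`
into `(γ, -a - x γ)`, so the Euclidean algorithm reduces every matrix to an upper triangular one
by left multiplication with elements of `K`, and upper triangular matrices of `SL₂` are words in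
`c` and upper unipotents.
-/

/-- The ring `ℤ[1/2]`, the localization of `ℤ` away from `2`. -/
abbrev Zhalf : Type := Localization.Away (2 : ℤ)

/-- `1/2` as an element of `ℤ[1/2]`. -/
noncomputable def half : Zhalf := IsLocalization.Away.invSelf (2 : ℤ)

/-- `SL₂(ℤ[1/2])`. -/
abbrev SL2Zhalf := Matrix.SpecialLinearGroup (Fin 2) Zhalf

/-- `PSL₂(ℤ[1/2])`, the quotient of `SL₂(ℤ[1/2])` by its center. -/
abbrev PSL2Zhalf := SL2Zhalf ⧸ Subgroup.center SL2Zhalf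

/-- The matrix `c = [[0, 1], [-1, 0]]` as an element of `SL₂(ℤ[1/2])`. -/
noncomputable def matC : SL2Zhalf :=
  ⟨!![(0 : Zhalf), 1; -1, 0], by simp [Matrix.det_fin_two_of]⟩

/-- The matrix `t = [[1, -1/4], [0, 1]]` as an element of `SL₂(ℤ[1/2])`. -/
noncomputable def matT : SL2Zhalf :=
  ⟨!![(1 : Zhalf), -(half * half); 0, 1], by simp [Matrix.det_fin_two_of]⟩

open Matrix Matrix.SpecialLinearGroup

open scoped MatrixGroups

section SL2

variable {R : Type*} [CommRing R]

variable (R) in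
def weyl : SL(2, R) := ⟨!![0, 1; -1, 0], by simp [det_fin_two_of]⟩

def upperUnipotent : AddChar R SL(2, R) where
  toFun a := ⟨!![1, a; 0, 1], by simp [det_fin_two_of]⟩
  map_zero_eq_one' := Subtype.ext (one_fin_two (α := R)).symm
  map_add_eq_mul' a b := Subtype.ext <| by
    change _ = (!![1, a; 0, 1] : Matrix (Fin 2) (Fin 2) R) * !![1, b; 0, 1]
    simp [add_comm]

def diagUnit (u : Rˣ) : SL(2, R) := ⟨!![(u : R), 0; 0, ↑u⁻¹], by simp [det_fin_two_of]⟩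

@[simp] lemma coe_weyl : (weyl R : Matrix (Fin 2) (Fin 2) R) = !![0, 1; -1, 0] := rfl

@[simp] lemma coe_weyl_inv : (↑(weyl R)⁻¹ : Matrix (Fin 2) (Fin 2) R) = !![0, -1; 1, 0] := by
  simp [coe_inv, adjugate_fin_two_of]

@[simp] lemma coe_upperUnipotent (a : R) :
    (upperUnipotent a : Matrix (Fin 2) (Fin 2) R) = !![1, a; 0, 1] := rfl

@[simp] lemma coe_diagUnit (u : Rˣ) :
    (diagUnit u : Matrix (Fin 2) (Fin 2) R) = !![(u : R), 0; 0, ↑u⁻¹] := rfl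

lemma eq_mul_of_apply_one_zero_eq_zero {M : SL(2, R)} (hM : M 1 0 = 0) :
    M = upperUnipotent (M 0 0) * weyl R * upperUnipotent (M 1 1) * (weyl R)⁻¹ *
      upperUnipotent (M 0 0) * (weyl R)⁻¹ * upperUnipotent (M 1 1 * M 0 1) := by
  have hdet := M.det_coe
  rw [det_fin_two, hM, mul_zero, sub_zero] at hdet
  ext i j
  fin_cases i <;> fin_cases j <;> simp [coe_mul, mul_apply, Fin.sum_univ_two, hM] <;> grind

lemma diagUnit_mul_upperUnipotent_mul_inv (u : Rˣ) (y : R) :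
    diagUnit u * upperUnipotent y * (diagUnit u)⁻¹ = upperUnipotent (u * u * y) :=
  Subtype.ext <| by simp [coe_inv, adjugate_fin_two_of, mul_right_comm]

lemma weyl_mul_upperUnipotent_mul_apply_one_zero (x : R) (M : SL(2, R)) :
    (weyl R * upperUnipotent x * M) 1 0 = -M 0 0 - x * M 1 0 := by
  simp [coe_mul, mul_apply, Fin.sum_univ_two, sub_eq_add_neg]

variable {H : Subgroup SL(2, R)}

lemma mem_of_apply_one_zero_eq_zero (hw : weyl R ∈ H) {M : SL(2, R)} (hM : M 1 0 = 0)
    (h₀₀ : upperUnipotent (M 0 0) ∈ H) (h₁₁ : upperUnipotent (M 1 1) ∈ H)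
    (h₀₁ : upperUnipotent (M 1 1 * M 0 1) ∈ H) : M ∈ H := by
  rw [eq_mul_of_apply_one_zero_eq_zero hM]
  have hw' := inv_mem hw
  repeat' apply mul_mem
  all_goals assumption

theorem eq_top_of_weyl_mem_of_upperUnipotent_mem (f : R → ℕ)
    (hf : ∀ a b, b ≠ 0 → ∃ x, f (a - x * b) < f b) (hw : weyl R ∈ H)
    (hu : ∀ a, upperUnipotent a ∈ H) : H = ⊤ := by
  refine (Subgroup.eq_top_iff' H).2 fun M => ?_
  induction hn : f (M 1 0) using Nat.strong_induction_on generalizing M with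
  | _ n ih =>
    by_cases h₁₀ : M 1 0 = 0
    · exact mem_of_apply_one_zero_eq_zero hw h₁₀ (hu _) (hu _) (hu _)
    obtain ⟨x, hx⟩ := hf (-M 0 0) (M 1 0) h₁₀
    have hg : weyl R * upperUnipotent x ∈ H := mul_mem hw (hu x)
    have hgM : weyl R * upperUnipotent x * M ∈ H := by
      refine ih _ ?_ _ rfl
      rwa [← hn, weyl_mul_upperUnipotent_mul_apply_one_zero]
    exact (H.mul_mem_cancel_left hg).1 hgM

end SL2

section IntAssocNorm

variable {R : Type*} [CommRing R]

/-- For `ℤ[1/2]` this is the absolute value of the odd part. -/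
noncomputable def intAssocNorm (x : R) : ℕ :=
  sInf {n | ∃ (u : Rˣ) (m : ℤ), x = u * m ∧ m.natAbs = n}

lemma intAssocNorm_le (u : Rˣ) (m : ℤ) : intAssocNorm (u * m : R) ≤ m.natAbs :=
  Nat.sInf_le ⟨u, m, rfl, rfl⟩

lemma exists_natAbs_eq_intAssocNorm (h : ∀ x : R, ∃ (u : Rˣ) (m : ℤ), x = u * m) (x : R) :
    ∃ (u : Rˣ) (m : ℤ), x = u * m ∧ m.natAbs = intAssocNorm x :=
  Nat.sInf_mem (s := {n | ∃ (u : Rˣ) (m : ℤ), x = u * m ∧ m.natAbs = n})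
    (by obtain ⟨u, m, hx⟩ := h x; exact ⟨_, u, m, hx, rfl⟩)

theorem exists_intAssocNorm_sub_mul_lt (h : ∀ x : R, ∃ (u : Rˣ) (m : ℤ), x = u * m) (a : R)
    {b : R} (hb : b ≠ 0) : ∃ x, intAssocNorm (a - x * b) < intAssocNorm b := by
  obtain ⟨v, a₀, rfl⟩ := h a
  obtain ⟨u, m, rfl, hm⟩ := exists_natAbs_eq_intAssocNorm h b
  have hm₀ : m ≠ 0 := by rintro rfl; simp at hb
  refine ⟨v * u⁻¹ * (a₀ / m : ℤ), ?_⟩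
  have key : (v * a₀ : R) - v * u⁻¹ * (a₀ / m : ℤ) * (u * m) = v * (a₀ % m : ℤ) := by
    rw [Int.emod_def]
    push_cast
    linear_combination (-(v : R) * (a₀ / m : ℤ) * m) * u.inv_mul
  rw [key, ← hm]
  refine (intAssocNorm_le v _).trans_lt ?_
  have hlt := Int.emod_lt a₀ hm₀
  have hnonneg := Int.emod_nonneg a₀ hm₀
  omega

end IntAssocNorm

lemma two_mul_half : (2 : Zhalf) * half = 1 := by
  simpa [half] using IsLocalization.Away.mul_invSelf (S := Zhalf) (2 : ℤ)

lemma four_mul_half_mul_half : (4 : Zhalf) * (half * half) = 1 := by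
  linear_combination (2 * half + 1) * two_mul_half

noncomputable def halfUnit : Zhalfˣ :=
  ⟨half, 2, (mul_comm _ _).trans two_mul_half, two_mul_half⟩

lemma exists_mul_two_pow_eq_intCast (x : Zhalf) : ∃ (n : ℕ) (m : ℤ), x * 2 ^ n = m := by
  simpa only [map_ofNat, eq_intCast] using IsLocalization.Away.surj (2 : ℤ) x

lemma exists_eq_unit_mul_intCast (x : Zhalf) : ∃ (u : Zhalfˣ) (m : ℤ), x = u * m := by
  obtain ⟨n, m, hm⟩ := exists_mul_two_pow_eq_intCast x
  refine ⟨halfUnit ^ n, m, ?_⟩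
  rw [Units.val_pow_eq_pow_val, ← hm]
  change x = half ^ n * (x * 2 ^ n)
  rw [mul_left_comm, ← mul_pow, mul_comm half, two_mul_half, one_pow, mul_one]

lemma matC_eq_weyl : matC = weyl Zhalf := rfl

lemma matT_eq_upperUnipotent : matT = upperUnipotent (-(half * half)) := rfl

noncomputable def closureCT : Subgroup SL2Zhalf := Subgroup.closure {matC, matT}

lemma weyl_mem_closureCT : weyl Zhalf ∈ closureCT :=
  Subgroup.subset_closure (by simp [matC_eq_weyl])

lemma upperUnipotent_intCast_mul_quarter_mem (m : ℤ) :
    upperUnipotent (m * (half * half)) ∈ closureCT := by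
  have hT : matT ∈ closureCT := Subgroup.subset_closure (by simp)
  have : upperUnipotent (m * (half * half)) = matT ^ (-m) := by
    rw [matT_eq_upperUnipotent, ← AddChar.map_zsmul_eq_zpow, zsmul_eq_mul]
    push_cast
    ring_nf
  exact this ▸ zpow_mem hT _

lemma upperUnipotent_mem_of_four_mul_eq {y : Zhalf} (m : ℤ) (h : 4 * y = m) :
    upperUnipotent y ∈ closureCT := by
  convert upperUnipotent_intCast_mul_quarter_mem m using 2
  linear_combination (-y) * four_mul_half_mul_half + (half * half) * h

lemma diagUnit_halfUnit_mem : diagUnit halfUnit ∈ closureCT := by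
  refine mem_of_apply_one_zero_eq_zero weyl_mem_closureCT rfl ?_ ?_ ?_
  · refine upperUnipotent_mem_of_four_mul_eq 2 ?_
    simp [halfUnit]
    linear_combination 2 * two_mul_half
  · exact upperUnipotent_mem_of_four_mul_eq 8 (by norm_num [halfUnit])
  · exact upperUnipotent_mem_of_four_mul_eq 0 (by simp)

lemma upperUnipotent_intCast_mul_quarter_pow_mem (m : ℤ) (k : ℕ) :
    upperUnipotent (m * (half * half) ^ k) ∈ closureCT := by
  induction k with
  | zero => exact upperUnipotent_mem_of_four_mul_eq (4 * m) (by push_cast; ring)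
  | succ k ih =>
    have h := mul_mem (mul_mem diagUnit_halfUnit_mem ih) (inv_mem diagUnit_halfUnit_mem)
    rw [diagUnit_mul_upperUnipotent_mul_inv] at h
    convert h using 2
    simp only [halfUnit]
    ring

lemma upperUnipotent_mem_closureCT (x : Zhalf) : upperUnipotent x ∈ closureCT := by
  obtain ⟨n, m, hm⟩ := exists_mul_two_pow_eq_intCast x
  convert upperUnipotent_intCast_mul_quarter_pow_mem (m * 2 ^ n) n using 2
  push_cast
  rw [← hm, mul_assoc, mul_assoc, ← mul_pow, ← mul_pow, ← mul_assoc,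
    show (2 : Zhalf) * 2 = 4 by norm_num, four_mul_half_mul_half, one_pow, mul_one]

theorem closureCT_eq_top : closureCT = ⊤ :=
  eq_top_of_weyl_mem_of_upperUnipotent_mem intAssocNorm
    (fun a _ hb => exists_intAssocNorm_sub_mul_lt exists_eq_unit_mul_intCast a hb)
    weyl_mem_closureCT upperUnipotent_mem_closureCT

/-- The images of the matrices `[[0, 1], [-1, 0]]` and `[[1, -1/4], [0, 1]]` generate
`PSL₂(ℤ[1/2])`. -/
theorem closure_c_t_eq_top :
    Subgroup.closure {((matC : SL2Zhalf) : PSL2Zhalf), ((matT : SL2Zhalf) : PSL2Zhalf)} =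
      (⊤ : Subgroup PSL2Zhalf) := by
  have himg : ({((matC : SL2Zhalf) : PSL2Zhalf), ((matT : SL2Zhalf) : PSL2Zhalf)} :
      Set PSL2Zhalf) = (QuotientGroup.mk' (Subgroup.center SL2Zhalf)) '' {matC, matT} := by
    rw [Set.image_pair]
    rfl
  rw [himg, ← MonoidHom.map_closure, ← closureCT, closureCT_eq_top]
  exact Subgroup.map_top_of_surjective _ (QuotientGroup.mk'_surjective _)
end

section
/- The free Grigorchuk group 𝒢 contains a nonabelian free subgroup of rank 2: there exists an injective group homomorphism from FreeGroup Bool into PresentedGroup rels. -/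
/-!
`𝒢` maps to `V ∗ V`, with `V` the Klein four group, by sending `a` to an involution of the first
factor and `b, c, d` to the three involutions of the second. In a free product, if `p ≠ 1` lies
in one factor and the `q k` are distinct nontrivial elements of another, the elements `(p q k)²`
play ping-pong on reduced words: `(p q k)²` sends every word not beginning with `(q k)⁻¹ p⁻¹` to
one beginning with `p (q k)`, and its inverse `((q k)⁻¹ p⁻¹)²` does the converse. Hence the images
of `(ab)²` and `(ac)²` generate a free group.
-/

/-- The relations of the free Grigorchuk group
`𝒢 = ⟨a, b, c, d ∣ a² = b² = c² = d² = bcd = 1⟩`. -/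
def grigRels : Set (FreeGroup (Fin 4)) :=
  {(FreeGroup.of 0) ^ 2, (FreeGroup.of 1) ^ 2, (FreeGroup.of 2) ^ 2, (FreeGroup.of 3) ^ 2,
    FreeGroup.of 1 * FreeGroup.of 2 * FreeGroup.of 3}

namespace Monoid.CoprodI.Word

variable {ι : Type*} [DecidableEq ι] {G : ι → Type*} [∀ i, Group (G i)] [∀ i, DecidableEq (G i)]

theorem toList_of_smul_of_fstIdx_ne {i : ι} {p : G i} (hp : p ≠ 1) {w : Word G}
    (hw : w.fstIdx ≠ some i) : (of p • w).toList = ⟨i, p⟩ :: w.toList := by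
  rw [← cons_eq_smul (h1 := hw) (h2 := hp), cons_toList]

theorem fstIdx_of_smul {i : ι} {p : G i} (hp : p ≠ 1) {w : Word G}
    (hw : w.toList.head? ≠ some ⟨i, p⁻¹⟩) : (of p • w).fstIdx = some i := by
  suffices ∃ p' : G i, p' ≠ 1 ∧ ∃ w' : Word G, w'.fstIdx ≠ some i ∧ of p • w = of p' • w' by
    obtain ⟨p', hp', w', hw', h⟩ := this
    simp [h, fstIdx, toList_of_smul_of_fstIdx_ne hp' hw']
  induction w using consRecOn with
  | empty => exact ⟨p, hp, empty, by simp [fstIdx], rfl⟩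
  | cons k h w _ _ _ =>
    by_cases hk : k = i
    · subst hk
      refine ⟨p * h, fun h1 => hw ?_, w, ‹_›, by rw [cons_eq_smul, smul_smul, map_mul]⟩
      simp [eq_inv_of_mul_eq_one_right h1]
    · exact ⟨p, hp, _, by simpa [fstIdx] using hk, rfl⟩

theorem fstIdx_of_smul_of_smul {i j : ι} (hij : i ≠ j) {p : G i} {q : G j} (hp : p ≠ 1)
    (hq : q ≠ 1) {w : Word G} (hw : ¬ [⟨j, q⁻¹⟩, ⟨i, p⁻¹⟩] <+: w.toList) :
    (of p • of q • w).fstIdx = some i := by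
  apply fstIdx_of_smul hp
  induction w using consRecOn with
  | empty => simp [toList_of_smul_of_fstIdx_ne hq (w := empty) (by simp [fstIdx]), hij.symm]
  | cons k h w hw' h1 _ =>
    by_cases hqh : (⟨k, h⟩ : Σ i, G i) = ⟨j, q⁻¹⟩
    · obtain ⟨rfl, hh⟩ := Sigma.mk.inj_iff.mp hqh
      obtain rfl := eq_of_heq hh
      rw [cons_eq_smul, smul_smul, ← map_mul, mul_inv_cancel, map_one, one_smul]
      intro hhead
      apply hw
      obtain ⟨l, hl⟩ := List.head?_eq_some_iff.mp hhead
      simp [hl]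
    · have := fstIdx_of_smul hq (w := cons h w hw' h1) (by simpa using hqh)
      intro hhead
      simp only [fstIdx, hhead, Option.map_some, Option.some.injEq] at this
      exact hij this

theorem prefix_toList_sq_smul {i j : ι} (hij : i ≠ j) {p : G i} {q : G j} (hp : p ≠ 1) (hq : q ≠ 1)
    {w : Word G} (hw : ¬ [⟨j, q⁻¹⟩, ⟨i, p⁻¹⟩] <+: w.toList) :
    [⟨i, p⟩, ⟨j, q⟩] <+: ((of p * of q) ^ 2 • w).toList := by
  have hpq := fstIdx_of_smul_of_smul hij hp hq hw
  have hqpq : (of q • of p • of q • w).toList = ⟨j, q⟩ :: (of p • of q • w).toList :=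
    toList_of_smul_of_fstIdx_ne hq (by rw [hpq]; simpa using hij)
  rw [sq, mul_smul, mul_smul, mul_smul, toList_of_smul_of_fstIdx_ne hp, hqpq]
  · simp
  · simp [fstIdx, hqpq, hij.symm]

end Monoid.CoprodI.Word

namespace Monoid.CoprodI

open Word

universe u

variable {ι : Type u} [DecidableEq ι] {G : ι → Type u} [∀ i, Group (G i)] [∀ i, DecidableEq (G i)]

theorem injective_freeGroupLift_sq_of_mul_of {κ : Type u} [Nontrivial κ] {i j : ι} (hij : i ≠ j)
    {p : G i} (hp : p ≠ 1) {q : κ → G j} (hq : ∀ k, q k ≠ 1) (hq_inj : Function.Injective q) :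
    Function.Injective (FreeGroup.lift fun k => (of p * of (q k)) ^ 2) := by
  set X : κ → Set (Word G) := fun k => {w | [⟨i, p⟩, ⟨j, q k⟩] <+: w.toList}
  set Y : κ → Set (Word G) := fun k => {w | [⟨j, (q k)⁻¹⟩, ⟨i, p⁻¹⟩] <+: w.toList}
  refine FreeGroup.injective_lift_of_ping_pong _ X Y (fun k => ?_) ?_ ?_ ?_ ?_ ?_
  · exact ⟨cons p (cons (q k) empty (by simp [fstIdx]) (hq k)) (by simp [fstIdx, hij.symm]) hp,
      by simp [X]⟩
  · intro k k' hkk'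
    refine Set.disjoint_left.mpr fun w hw hw' => hkk' (hq_inj ?_).symm
    obtain ⟨t, ht⟩ := hw
    simpa [X, ← ht] using hw'
  · intro k k' hkk'
    refine Set.disjoint_left.mpr fun w hw hw' => hkk' (hq_inj ?_).symm
    obtain ⟨t, ht⟩ := hw
    simpa [Y, ← ht] using hw'
  · intro k k'
    refine Set.disjoint_left.mpr fun w hw hw' => hij ?_
    obtain ⟨t, ht⟩ := hw
    simp only [Y, Set.mem_ofPred_eq, ← ht, List.cons_append, List.cons_prefix_cons,
      Sigma.mk.injEq] at hw'
    exact hw'.1.1.symm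
  · rintro k _ ⟨w, hw, rfl⟩
    exact prefix_toList_sq_smul hij hp (hq k) hw
  · rintro k _ ⟨w, hw, rfl⟩
    have hinv : ((of p * of (q k)) ^ 2)⁻¹ = (of (q k)⁻¹ * of p⁻¹) ^ 2 := by
      simp only [sq, mul_inv_rev, map_inv, mul_assoc]
    simpa only [Pi.inv_apply, hinv, Y, Set.mem_ofPred_eq] using
      prefix_toList_sq_smul hij.symm (inv_ne_one.mpr (hq k)) (inv_ne_one.mpr hp) (w := w)
        (by simpa [X] using hw)

end Monoid.CoprodI

open Monoid.CoprodI

abbrev KleinFour : Type := Multiplicative (ZMod 2 × ZMod 2)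

def grigToCoprod : PresentedGroup grigRels →* Monoid.CoprodI fun _ : Bool => KleinFour :=
  PresentedGroup.toGroup (f := ![of (i := false) (Multiplicative.ofAdd (1, 0)),
      of (i := true) (Multiplicative.ofAdd (1, 0)), of (i := true) (Multiplicative.ofAdd (0, 1)),
      of (i := true) (Multiplicative.ofAdd (1, 1))]) <| by
    rintro r (rfl | rfl | rfl | rfl | rfl) <;> simp <;> decide

def grigFreeEmbedding : FreeGroup Bool →* PresentedGroup grigRels :=
  FreeGroup.lift fun k => (PresentedGroup.of 0 * PresentedGroup.of (bif k then 1 else 2)) ^ 2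

theorem grigToCoprod_comp_grigFreeEmbedding :
    grigToCoprod.comp grigFreeEmbedding = FreeGroup.lift fun k =>
      (of (i := false) (Multiplicative.ofAdd (1, 0) : KleinFour) *
        of (i := true) (Multiplicative.ofAdd (bif k then (1, 0) else (0, 1)) : KleinFour)) ^ 2 := by
  ext k
  cases k <;> simp [grigToCoprod, grigFreeEmbedding]

/-- The free Grigorchuk group contains a nonabelian free subgroup of rank 2: there is an
injective group homomorphism from the free group on two generators into `𝒢`. -/
theorem freeGrigorchukGroup_contains_free :
    ∃ φ : FreeGroup Bool →* PresentedGroup grigRels, Function.Injective φ := by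
  refine ⟨grigFreeEmbedding, .of_comp (f := grigToCoprod) ?_⟩
  rw [← MonoidHom.coe_comp, grigToCoprod_comp_grigFreeEmbedding]
  exact injective_freeGroupLift_sq_of_mul_of Bool.false_ne_true (by decide) (by decide) (by decide)
end

section
/- Let k ≥ 2 and let N be a nontrivial normal subgroup of the free group FreeGroup (Fin k) (N is Normal and N ≠ ⊥). Then N contains a nontrivial element of the commutator subgroup: there exists r with r ∈ N, r ∈ commutator (FreeGroup (Fin k)), and r ≠ 1. -/
/-!
A free group on at least two generators has trivial centre: if `x ≠ 1` and the generator `a`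
differs from the last letter of the reduced word of `x`, then `x a x⁻¹` is already reduced as
written, of length `2|x| + 1 > 1`, so it is not `a`. Hence a nontrivial `x ∈ N` fails to
commute with some `g`, and by normality `⁅x, g⁆` is a nontrivial element of `N ∩ [F, F]`.
-/

namespace FreeGroup

variable {α : Type*} {L : List (α × Bool)}

theorem IsReduced.invRev (h : IsReduced L) : IsReduced (invRev L) := by
  rw [IsReduced, FreeGroup.invRev, List.isChain_reverse, List.isChain_map]
  exact h.imp fun a b hab heq => by simpa using (hab heq.symm).symm

theorem IsReduced.concat (h : IsReduced L) {c : α × Bool}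
    (hc : ∀ a ∈ L.getLast?, a.1 ≠ c.1) : IsReduced (L ++ [c]) :=
  List.isChain_append.mpr ⟨h, .singleton c, fun a ha _ hb heq =>
    absurd (by simpa using Option.mem_some_iff.mp hb ▸ heq) (hc a ha)⟩

theorem IsReduced.append_cons_invRev (h : IsReduced L) {c : α × Bool}
    (hc : ∀ a ∈ L.getLast?, a.1 ≠ c.1) : IsReduced (L ++ c :: FreeGroup.invRev L) := by
  have hleft : IsReduced (L ++ [c]) := h.concat hc
  have hright : IsReduced ([c] ++ FreeGroup.invRev L) := by
    simpa [invRev_append, FreeGroup.invRev] using (h.concat (c := (c.1, !c.2)) hc).invRev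
  simpa using hleft.append_overlap hright (List.cons_ne_nil c [])

variable [DecidableEq α]

theorem toWord_mul_of_mul_inv {x : FreeGroup α} {i : α}
    (hi : ∀ a ∈ x.toWord.getLast?, a.1 ≠ i) :
    (x * of i * x⁻¹).toWord = x.toWord ++ (i, true) :: invRev x.toWord := by
  have hx : x * of i * x⁻¹ = mk (x.toWord ++ (i, true) :: invRev x.toWord) := by
    conv_lhs => rw [← mk_toWord (x := x)]
    simp [of, inv_mk, mul_mk]
  rw [hx, toWord_mk, (isReduced_toWord.append_cons_invRev hi).reduce_eq]

theorem mul_of_mul_inv_ne_of {x : FreeGroup α} (hx : x ≠ 1) {i : α}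
    (hi : ∀ a ∈ x.toWord.getLast?, a.1 ≠ i) : x * of i * x⁻¹ ≠ of i := by
  intro h
  have hlen := congrArg (List.length ∘ toWord) h
  simp only [Function.comp_apply, toWord_mul_of_mul_inv hi, toWord_of, List.length_append,
    List.length_cons, invRev_length, List.length_nil] at hlen
  exact hx (toWord_eq_nil_iff.mp (List.eq_nil_of_length_eq_zero (by omega)))

theorem center_eq_bot [Nontrivial α] : Subgroup.center (FreeGroup α) = ⊥ := by
  classical
  refine (Subgroup.eq_bot_iff_forall _).mpr fun x hx => ?_
  by_contra hx1
  obtain ⟨i, hi⟩ : ∃ i : α, ∀ a ∈ x.toWord.getLast?, a.1 ≠ i := by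
    cases x.toWord.getLast? with
    | none => simp
    | some a => simpa [eq_comm] using exists_ne a.1
  apply mul_of_mul_inv_ne_of hx1 hi
  rw [← Subgroup.mem_center_iff.mp hx, mul_inv_cancel_right]

end FreeGroup

open scoped commutatorElement in
theorem Subgroup.exists_mem_commutator_ne_one_of_center_eq_bot {G : Type*} [Group G]
    (hG : Subgroup.center G = ⊥) (N : Subgroup G) [N.Normal] (hN : N ≠ ⊥) :
    ∃ r ∈ N, r ∈ _root_.commutator G ∧ r ≠ 1 := by
  obtain ⟨x, hxN, hx1⟩ := N.bot_or_exists_ne_one.resolve_left hN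
  obtain ⟨g, hg⟩ : ∃ g, g * x ≠ x * g := by
    by_contra! h
    exact hx1 (by simpa [hG] using Subgroup.mem_center_iff.mpr h)
  have hmem : ⁅x, g⁆ ∈ ⁅N, ⊤⁆ := commutator_mem_commutator hxN (mem_top g)
  refine ⟨⁅x, g⁆, commutator_le_left N ⊤ hmem, commutator_mono le_top le_rfl hmem, ?_⟩
  rw [Ne, commutatorElement_eq_one_iff_mul_comm]
  exact fun h => hg h.symm

/-- Every nontrivial normal subgroup of the free group on `k ≥ 2` generators contains a
nontrivial element of the commutator subgroup. -/
theorem normal_subgroup_meets_commutator (k : ℕ) (hk : 2 ≤ k)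
    (N : Subgroup (FreeGroup (Fin k))) [N.Normal] (hN : N ≠ ⊥) :
    ∃ r : FreeGroup (Fin k), r ∈ N ∧ r ∈ commutator (FreeGroup (Fin k)) ∧ r ≠ 1 := by
  have : Nontrivial (Fin k) := Fin.nontrivial_iff_two_le.mpr hk
  exact Subgroup.exists_mem_commutator_ne_one_of_center_eq_bot FreeGroup.center_eq_bot N hN
end

section
/- Let k be a positive natural number, F := FreeGroup (Fin k), and let T : ℕ → Subgroup F be the 2-Frattini series: T 0 = ⊤ and, for each i, T (i+1) is the subgroup generated by {x² : x ∈ T i} ∪ {⁅x, y⁆ : x, y ∈ T i}. Then every T i has finite index in F (T i is FiniteIndex), and ⨅ i, T i = ⊥: the free group of finite rank is residually a finite 2-group. -/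
/-!
Both halves rest on the step `H ↦ H²[H, H]`. It preserves finite index in a finitely generated
group: `H` is finitely generated by Schreier's lemma, and the quotient of `H` by `H²[H, H]` has
exponent 2, so it is a finitely generated abelian torsion group, hence finite.

For the intersection, take `w ≠ 1` with reduced word of length `m`. Send each generator `x_i` to a
product `u_(i,0) u_(i,1)` of unipotent involutions `u_a = 1 + E_a` over `𝔽₂`, so that `x_i⁻¹` goes
to `u_(i,1) u_(i,0)`. The image of `w` is then a product of `n = 2m` factors `1 + E_(c_t)` along a
word `c` in which no two adjacent letters are equal (this is where reducedness enters). Realise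
`E_a` as the `(n+1) × (n+1)` matrix with a `1` at `(t, t+1)` whenever `c_t = a`: adjacent letters
being distinct gives `E_a² = 0`, and the only way to reach entry `(0, n)` of the product is to pick
`E_(c_t)` from every factor, so that entry is `1`. On the other hand, in a ring filtered by
`B₀ ⊇ B₁ ⊇ ⋯` with `2 ∈ B₁`, squares and commutators of elements of `1 + B_j` lie in
`1 + B_(j+1)` for `j ≥ 1`; hence the `i`-th term of the series maps into `1 + B_(i+1)`, which for
the filtration of matrices by superdiagonals forces the image of `w` to be `1` once `i = n`.
-/

open scoped commutatorElement

namespace Subgroup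

variable {G G' : Type*} [Group G] [Group G']

def sqCommClosure (H : Subgroup G) : Subgroup G :=
  closure ({x | ∃ y ∈ H, x = y ^ 2} ∪ {x | ∃ y ∈ H, ∃ z ∈ H, x = ⁅y, z⁆})

theorem sqCommClosure_le (H : Subgroup G) : H.sqCommClosure ≤ H := by
  rw [sqCommClosure, closure_le]
  rintro x (⟨y, hy, rfl⟩ | ⟨y, hy, z, hz, rfl⟩)
  · exact pow_mem hy 2
  · rw [commutatorElement_def]
    exact mul_mem (mul_mem (mul_mem hy hz) (inv_mem hy)) (inv_mem hz)

theorem sqCommClosure_le_comap {H : Subgroup G} {K : Subgroup G'} {f : G →* G'}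
    (hHK : H ≤ K.comap f) : H.sqCommClosure ≤ K.sqCommClosure.comap f := by
  rw [sqCommClosure, closure_le]
  rintro x (⟨y, hy, rfl⟩ | ⟨y, hy, z, hz, rfl⟩)
  · exact subset_closure (Or.inl ⟨f y, hHK hy, map_pow f y 2⟩)
  · exact subset_closure (Or.inr ⟨f y, hHK hy, f z, hHK hz, map_commutatorElement f y z⟩)

instance sqCommClosure_subgroupOf_normal (H : Subgroup G) :
    (H.sqCommClosure.subgroupOf H).Normal where
  conj_mem _ hn h := by
    have hconj : H ≤ H.comap (MulAut.conj (h : G)).toMonoidHom := fun _ hx =>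
      mul_mem (mul_mem h.2 hx) (inv_mem h.2)
    exact sqCommClosure_le_comap hconj hn

end Subgroup

theorem Group.finite_of_fg_of_sq_eq_one {Q : Type*} [Group Q] [Group.FG Q]
    (h : ∀ x : Q, x ^ 2 = 1) : Finite Q := by
  let _ : CommGroup Q :=
    { mul_comm a b :=
        (Commute.of_orderOf_dvd_two (fun g => orderOf_dvd_of_pow_eq_one (h g)) a b).eq }
  exact CommGroup.finite_of_fg_isMulTorsion _ fun x =>
    isOfFinOrder_iff_pow_eq_one.2 ⟨2, two_pos, h x⟩

instance Subgroup.finiteIndex_sqCommClosure {G : Type*} [Group G] [Group.FG G] (H : Subgroup G)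
    [H.FiniteIndex] : H.sqCommClosure.FiniteIndex := by
  have hsq : ∀ x : H ⧸ H.sqCommClosure.subgroupOf H, x ^ 2 = 1 := by
    intro x
    refine QuotientGroup.induction_on x fun y => ?_
    rw [← QuotientGroup.mk_pow, QuotientGroup.eq_one_iff]
    exact Subgroup.subset_closure (Or.inl ⟨y, y.2, rfl⟩)
  have : Finite (H ⧸ H.sqCommClosure.subgroupOf H) := Group.finite_of_fg_of_sq_eq_one hsq
  refine ⟨?_⟩
  rw [← Subgroup.relIndex_mul_index H.sqCommClosure_le]
  exact mul_ne_zero Subgroup.index_ne_zero_of_finite Subgroup.FiniteIndex.index_ne_zero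

def sqCommSeries (G : Type*) [Group G] : ℕ → Subgroup G
  | 0 => ⊤
  | i + 1 => (sqCommSeries G i).sqCommClosure

instance sqCommSeries_finiteIndex (G : Type*) [Group G] [Group.FG G] (i : ℕ) :
    (sqCommSeries G i).FiniteIndex := by
  induction i with
  | zero => exact (inferInstance : (⊤ : Subgroup G).FiniteIndex)
  | succ i ih => exact Subgroup.finiteIndex_sqCommClosure _

section Filtration

variable {A : Type*} [Ring A] {B : ℕ → AddSubgroup A} [SetLike.GradedMonoid B]

theorem mem_zero_of_sub_one_mem (hB : Antitone B) {x : A} {j : ℕ} (hx : x - 1 ∈ B j) :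
    x ∈ B 0 := by
  simpa using add_mem (hB (Nat.zero_le j) hx) SetLike.GradedOne.one_mem

theorem mul_sub_one_mem (hB : Antitone B) {x y : A} {j : ℕ} (hx : x - 1 ∈ B j)
    (hy : y - 1 ∈ B j) : x * y - 1 ∈ B j := by
  have hxy : x * (y - 1) ∈ B (0 + j) :=
    SetLike.GradedMul.mul_mem (mem_zero_of_sub_one_mem hB hx) hy
  rw [zero_add] at hxy
  simpa [mul_sub] using add_mem hxy hx

theorem sq_sub_one_mem (hB : Antitone B) (h2 : (2 : A) ∈ B 1) {x : A} {j : ℕ} (hj : 1 ≤ j)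
    (hx : x - 1 ∈ B j) : x ^ 2 - 1 ∈ B (j + 1) := by
  have h2x : 2 * (x - 1) ∈ B (1 + j) := SetLike.GradedMul.mul_mem h2 hx
  have hxx : (x - 1) * (x - 1) ∈ B (j + j) := SetLike.GradedMul.mul_mem hx hx
  rw [add_comm] at h2x
  rw [show x ^ 2 - 1 = 2 * (x - 1) + (x - 1) * (x - 1) by noncomm_ring]
  exact add_mem h2x (hB (by omega) hxx)

theorem commutatorElement_sub_one_mem (hB : Antitone B) {u v : Aˣ} {j : ℕ}
    (hu : (u : A) - 1 ∈ B j) (hv : (v : A) - 1 ∈ B j) (hu' : ((u⁻¹ : Aˣ) : A) - 1 ∈ B j)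
    (hv' : ((v⁻¹ : Aˣ) : A) - 1 ∈ B j) : ((⁅u, v⁆ : Aˣ) : A) - 1 ∈ B (j + j) := by
  have hcomm : ((u : A) - 1) * (v - 1) - (v - 1) * (u - 1) ∈ B (j + j) :=
    sub_mem (SetLike.GradedMul.mul_mem hu hv) (SetLike.GradedMul.mul_mem hv hu)
  have key : ((⁅u, v⁆ : Aˣ) : A) - 1
      = (((u : A) - 1) * (v - 1) - (v - 1) * (u - 1)) * ↑u⁻¹ * ↑v⁻¹ :=
    calc ((⁅u, v⁆ : Aˣ) : A) - 1 = (u * v - v * u) * ↑u⁻¹ * ↑v⁻¹ := by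
          simp [commutatorElement_def, sub_mul, mul_assoc]
      _ = _ := by noncomm_ring
  rw [key]
  exact (SetLike.GradedMul.mul_mem (SetLike.GradedMul.mul_mem hcomm
    (mem_zero_of_sub_one_mem hB hu')) (mem_zero_of_sub_one_mem hB hv') : _ ∈ B (j + j + 0 + 0))

variable (B) in
/-- `B j` is only a filtration, not an ideal, so `u⁻¹ - 1 ∈ B j` is required separately. -/
def congruenceSubgroup (hB : Antitone B) (j : ℕ) : Subgroup Aˣ where
  carrier := {u | (u : A) - 1 ∈ B j ∧ ((u⁻¹ : Aˣ) : A) - 1 ∈ B j}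
  one_mem' := by simp
  mul_mem' := fun ⟨hu, hu'⟩ ⟨hv, hv'⟩ =>
    ⟨mul_sub_one_mem hB hu hv, by simpa using mul_sub_one_mem hB hv' hu'⟩
  inv_mem' := fun ⟨hu, hu'⟩ => ⟨hu', by simpa using hu⟩

theorem sqCommClosure_congruenceSubgroup_le (hB : Antitone B) (h2 : (2 : A) ∈ B 1) {j : ℕ}
    (hj : 1 ≤ j) :
    (congruenceSubgroup B hB j).sqCommClosure ≤ congruenceSubgroup B hB (j + 1) := by
  rw [Subgroup.sqCommClosure, Subgroup.closure_le]
  rintro x (⟨u, ⟨hu, hu'⟩, rfl⟩ | ⟨u, ⟨hu, hu'⟩, v, ⟨hv, hv'⟩, rfl⟩)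
  · exact ⟨by simpa using sq_sub_one_mem hB h2 hj hu, by simpa using sq_sub_one_mem hB h2 hj hu'⟩
  · refine ⟨hB (by omega) (commutatorElement_sub_one_mem hB hu hv hu' hv'), ?_⟩
    rw [commutatorElement_inv]
    exact hB (by omega) (commutatorElement_sub_one_mem hB hv hu hv' hu')

theorem sqCommSeries_le_comap_congruenceSubgroup {G : Type*} [Group G] (hB : Antitone B)
    (h2 : (2 : A) ∈ B 1) (Φ : G →* Aˣ) (hΦ : Φ.range ≤ congruenceSubgroup B hB 1) (i : ℕ) :
    sqCommSeries G i ≤ (congruenceSubgroup B hB (i + 1)).comap Φ := by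
  induction i with
  | zero => exact fun g _ => hΦ ⟨g, rfl⟩
  | succ i ih =>
    exact (Subgroup.sqCommClosure_le_comap ih).trans
      (Subgroup.comap_mono (sqCommClosure_congruenceSubgroup_le hB h2 (by omega)))

end Filtration

namespace Matrix

variable (R : Type*) [Ring R] (m : ℕ)

def upperFiltration (j : ℕ) : AddSubgroup (Matrix (Fin m) (Fin m) R) where
  carrier := {M | ∀ s t : Fin m, (t : ℕ) < s + j → M s t = 0}
  add_mem' hM hN s t hst := by simp [hM s t hst, hN s t hst]
  zero_mem' _ _ _ := rfl
  neg_mem' hM s t hst := by simp [hM s t hst]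

instance : SetLike.GradedMonoid (upperFiltration R m) where
  one_mem s t hst := one_apply_ne (by omega)
  mul_mem {i j} M N hM hN s t hst := by
    change ∑ u, M s u * N u t = 0
    refine Finset.sum_eq_zero fun u _ => ?_
    by_cases hu : (u : ℕ) < s + i
    · rw [hM s u hu, zero_mul]
    · rw [hN u t (by omega), mul_zero]

theorem upperFiltration_antitone : Antitone (upperFiltration R m) :=
  fun _ _ hij _ hM s t hst => hM s t (by omega)

end Matrix

section DoubleLetters

variable {α : Type*}

def doubleLetters (L : List (α × Bool)) : List (α × Bool) :=
  L.flatMap fun x => [(x.1, !x.2), (x.1, x.2)]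

theorem length_doubleLetters (L : List (α × Bool)) :
    (doubleLetters L).length = 2 * L.length := by
  induction L with
  | nil => rfl
  | cons x L ih => simp [doubleLetters] at ih ⊢; omega

theorem FreeGroup.IsReduced.isChain_doubleLetters {L : List (α × Bool)}
    (hL : FreeGroup.IsReduced L) : (doubleLetters L).IsChain (· ≠ ·) := by
  rw [doubleLetters, List.flatMap_def, List.isChain_flatten (by simp)]
  refine ⟨List.forall_mem_map.2 fun x _ => by simp [Prod.ext_iff],
    (List.isChain_map _).2 (hL.imp ?_)⟩
  rintro ⟨i, b⟩ ⟨j, b'⟩ h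
  simp only [List.getLast?_cons_cons, List.getLast?_singleton, Option.mem_def,
    Option.some.injEq, List.head?_cons, forall_eq', ne_eq, Prod.mk.injEq, not_and]
  rintro rfl rfl
  simp at h

theorem FreeGroup.lift_mk_eq_prod_doubleLetters {M : Type*} [Group M] (f : α × Bool → M)
    (hf : ∀ a, f a * f a = 1) (L : List (α × Bool)) :
    FreeGroup.lift (fun i => f (i, false) * f (i, true)) (FreeGroup.mk L)
      = ((doubleLetters L).map f).prod := by
  have hf_inv a : (f a)⁻¹ = f a := inv_eq_of_mul_eq_one_right (hf a)
  rw [FreeGroup.lift_mk]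
  induction L with
  | nil => rfl
  | cons x L ih =>
    rw [List.map_cons, List.prod_cons, ih]
    obtain ⟨i, _ | _⟩ := x <;> simp [doubleLetters, hf_inv, mul_assoc]

end DoubleLetters

section LetterMatrix

variable (R : Type*) [Ring R] {α : Type*} [DecidableEq α]

def letterMatrix (l : List α) (a : α) : Matrix (Fin (l.length + 1)) (Fin (l.length + 1)) R :=
  Matrix.of fun s t => if (t : ℕ) = s + 1 ∧ l[(s : ℕ)]? = some a then 1 else 0

variable {R}

theorem mul_letterMatrix_apply {l : List α} {a : α}
    (M : Matrix (Fin (l.length + 1)) (Fin (l.length + 1)) R) (s t : Fin (l.length + 1)) :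
    (M * letterMatrix R l a) s t
      = ∑ u : Fin (l.length + 1), if (t : ℕ) = u + 1 ∧ l[(u : ℕ)]? = some a then M s u else 0 := by
  simp [Matrix.mul_apply, letterMatrix]

theorem letterMatrix_mul_self {l : List α} (hl : l.IsChain (· ≠ ·)) (a : α) :
    letterMatrix R l a * letterMatrix R l a = 0 := by
  ext s t
  rw [mul_letterMatrix_apply]
  refine Finset.sum_eq_zero fun u _ => ?_
  simp only [letterMatrix, Matrix.of_apply, ite_eq_right_iff]
  rintro ⟨-, hu⟩ ⟨hsu, hs⟩
  obtain ⟨hu_lt, hu_eq⟩ := List.getElem?_eq_some_iff.1 hu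
  obtain ⟨_, hs_eq⟩ := List.getElem?_eq_some_iff.1 hs
  exact absurd (hs_eq.trans hu_eq.symm) (by simpa [hsu] using hl.getElem s (by omega))

theorem prod_one_add_letterMatrix_take_apply_zero (l : List α) {m : ℕ} (hm : m ≤ l.length)
    (t : Fin (l.length + 1)) (ht : m ≤ t) :
    ((l.take m).map fun a => 1 + letterMatrix R l a).prod 0 t = if (t : ℕ) = m then 1 else 0 := by
  induction m generalizing t with
  | zero =>
    rw [List.take_zero, List.map_nil, List.prod_nil, Matrix.one_apply]
    exact if_congr (by rw [Fin.ext_iff, eq_comm]; rfl) rfl rfl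
  | succ m ih =>
    obtain ⟨a, ha⟩ : ∃ a, l[m]? = some a := ⟨_, List.getElem?_eq_some_iff.2 ⟨by omega, rfl⟩⟩
    rw [List.take_add_one, ha, Option.toList_some, List.map_append, List.prod_append]
    simp only [List.map_cons, List.map_nil, List.prod_cons, List.prod_nil, mul_one, mul_add,
      Matrix.add_apply, mul_letterMatrix_apply]
    rw [ih (by omega) t (by omega), if_neg (by omega), zero_add]
    split_ifs with htm
    · rw [Finset.sum_eq_single ⟨m, by omega⟩]
      · rw [if_pos ⟨htm, ha⟩, ih (by omega) _ le_rfl, if_pos rfl]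
      · intro u _ hu
        exact if_neg fun h => hu (Fin.ext (by simp; omega))
      · simp
    · refine Finset.sum_eq_zero fun u _ => ?_
      split_ifs with hu
      · rw [ih (by omega) u (by omega), if_neg (by omega)]
      · rfl

theorem one_add_letterMatrix_mul_self [CharP R 2] {l : List α} (hl : l.IsChain (· ≠ ·))
    (a : α) : (1 + letterMatrix R l a) * (1 + letterMatrix R l a) = 1 := by
  simp only [add_mul, mul_add, one_mul, mul_one, letterMatrix_mul_self hl, add_zero]
  rw [add_assoc, CharTwo.add_self_eq_zero, add_zero]

variable (R) in
def letterUnit [CharP R 2] {l : List α} (hl : l.IsChain (· ≠ ·)) (a : α) :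
    (Matrix (Fin (l.length + 1)) (Fin (l.length + 1)) R)ˣ where
  val := 1 + letterMatrix R l a
  inv := 1 + letterMatrix R l a
  val_inv := one_add_letterMatrix_mul_self hl a
  inv_val := one_add_letterMatrix_mul_self hl a

theorem letterUnit_mem_congruenceSubgroup [CharP R 2] {l : List α} (hl : l.IsChain (· ≠ ·))
    (a : α) : letterUnit R hl a ∈ congruenceSubgroup _ (Matrix.upperFiltration_antitone R _) 1 := by
  have hE : letterMatrix R l a ∈ Matrix.upperFiltration R _ 1 := fun s t hst => by
    simp only [letterMatrix, Matrix.of_apply]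
    exact if_neg fun h => by omega
  exact ⟨by simpa [letterUnit] using hE, by simpa [letterUnit] using hE⟩

end LetterMatrix

theorem FreeGroup.exists_hom_not_mem_congruenceSubgroup {α : Type*} {w : FreeGroup α}
    (hw : w ≠ 1) :
    ∃ (n : ℕ) (Φ : FreeGroup α →* (Matrix (Fin (n + 1)) (Fin (n + 1)) (ZMod 2))ˣ),
      Φ.range ≤ congruenceSubgroup _ (Matrix.upperFiltration_antitone _ _) 1 ∧
        Φ w ∉ congruenceSubgroup _ (Matrix.upperFiltration_antitone _ _) (n + 1) := by
  classical
  set l := doubleLetters w.toWord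
  have hl : l.IsChain (· ≠ ·) := FreeGroup.isReduced_toWord.isChain_doubleLetters
  set Φ : FreeGroup α →* (Matrix (Fin (l.length + 1)) (Fin (l.length + 1)) (ZMod 2))ˣ :=
    FreeGroup.lift fun i => letterUnit _ hl (i, false) * letterUnit _ hl (i, true)
  have hΦw : (Φ w : Matrix _ _ (ZMod 2)) = (l.map fun a => 1 + letterMatrix _ l a).prod := by
    rw [← FreeGroup.mk_toWord (x := w), FreeGroup.lift_mk_eq_prod_doubleLetters (letterUnit _ hl)
      fun a => Units.ext (one_add_letterMatrix_mul_self hl a), ← Units.coeHom_apply,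
      map_list_prod, List.map_map]
    rfl
  refine ⟨l.length, Φ, ?_, ?_⟩
  · rw [FreeGroup.range_lift_eq_closure, Subgroup.closure_le]
    rintro _ ⟨i, rfl⟩
    exact mul_mem (letterUnit_mem_congruenceSubgroup hl _) (letterUnit_mem_congruenceSubgroup hl _)
  · rintro ⟨hΦw_sub, -⟩
    have hl_ne : l.length ≠ 0 := by simpa [l, length_doubleLetters] using hw
    have h_corner := prod_one_add_letterMatrix_take_apply_zero (R := ZMod 2) l le_rfl
      (Fin.last _) le_rfl
    rw [List.take_length, ← hΦw, if_pos (Fin.val_last _)] at h_corner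
    have h_zero := hΦw_sub 0 (Fin.last _) (by simp)
    rw [Matrix.sub_apply, h_corner, Matrix.one_apply_ne (by simp [Fin.ext_iff, hl_ne.symm])]
      at h_zero
    exact one_ne_zero h_zero

theorem FreeGroup.iInf_sqCommSeries_eq_bot (α : Type*) :
    ⨅ i, sqCommSeries (FreeGroup α) i = ⊥ := by
  refine (Subgroup.eq_bot_iff_forall _).2 fun w hw => by_contra fun hne => ?_
  obtain ⟨n, Φ, hΦ, hΦw⟩ := FreeGroup.exists_hom_not_mem_congruenceSubgroup hne
  have h2 : (2 : Matrix (Fin (n + 1)) (Fin (n + 1)) (ZMod 2)) ∈ Matrix.upperFiltration _ _ 1 := by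
    rw [CharTwo.two_eq_zero (R := Matrix (Fin (n + 1)) (Fin (n + 1)) (ZMod 2))]
    exact zero_mem _
  exact hΦw (sqCommSeries_le_comap_congruenceSubgroup _ h2 Φ hΦ n (Subgroup.mem_iInf.1 hw n))

theorem frattiniSeries_finiteIndex_and_iInf_eq_bot_general (k : ℕ)
    (T : ℕ → Subgroup (FreeGroup (Fin k)))
    (hT0 : T 0 = ⊤)
    (hTsucc : ∀ i, T (i + 1) = Subgroup.closure
      ({x : FreeGroup (Fin k) | ∃ y ∈ T i, x = y ^ 2} ∪
        {x : FreeGroup (Fin k) | ∃ y ∈ T i, ∃ z ∈ T i, x = ⁅y, z⁆})) :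
    (∀ i, (T i).FiniteIndex) ∧ (⨅ i, T i) = ⊥ := by
  obtain rfl : T = sqCommSeries (FreeGroup (Fin k)) := by
    funext i
    induction i with
    | zero => exact hT0
    | succ i ih => rw [hTsucc, ih]; rfl
  exact ⟨fun i => inferInstance, FreeGroup.iInf_sqCommSeries_eq_bot _⟩

/-- The 2-Frattini series of the free group of finite rank: every term has finite index,
and the intersection of the series is trivial (the free group is residually a finite
2-group). -/
theorem frattiniSeries_finiteIndex_and_iInf_eq_bot (k : ℕ) (hk : 0 < k)
    (T : ℕ → Subgroup (FreeGroup (Fin k)))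
    (hT0 : T 0 = ⊤)
    (hTsucc : ∀ i, T (i + 1) = Subgroup.closure
      ({x : FreeGroup (Fin k) | ∃ y ∈ T i, x = y ^ 2} ∪
        {x : FreeGroup (Fin k) | ∃ y ∈ T i, ∃ z ∈ T i, x = ⁅y, z⁆})) :
    (∀ i, (T i).FiniteIndex) ∧ (⨅ i, T i) = ⊥ :=
  frattiniSeries_finiteIndex_and_iInf_eq_bot_general k T hT0 hTsucc
end

section
/- Let g : Set ℕ → ℝ satisfy: (i) strict antitonicity: for all J ⊊ J', g(J') < g(J); and (ii) continuity from above along tails: for every K ⊆ ℕ, the sequence m ↦ g(K ∪ Set.Ici m) tends to g(K) as m → ∞. Then there exists a strictly increasing function μ : ℕ → ℕ such that, writing M := Set.range μ, the restriction of g to subsets of M is strictly decreasing with respect to the lexicographic order: for all J', J'' ⊆ M, if there exists x ∈ J'' with x ∉ J' and J' ∩ {y : y < x} = J'' ∩ {y : y < x}, then g(J'') < g(J'). -/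
open Filter

lemma sparse_key (g : Set ℕ → ℝ)
    (hstrict : ∀ J J' : Set ℕ, J ⊂ J' → g J' < g J)
    (hcont : ∀ K : Set ℕ,
      Filter.Tendsto (fun m : ℕ => g (K ∪ Set.Ici m)) Filter.atTop (nhds (g K)))
    (s : Finset ℕ) (x : ℕ) :
    ∃ m, x < m ∧ ∀ F : Set ℕ, F ⊆ ↑s → x ∉ F →
      g (F ∪ {x}) < g (F ∪ Set.Ici m) := by
  have hfin : ∀ t ∈ s.powerset, ∀ᶠ m in atTop,
      (x ∉ (↑t : Set ℕ) → g ((↑t : Set ℕ) ∪ {x}) < g ((↑t : Set ℕ) ∪ Set.Ici m)) := by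
    intro t _
    by_cases hx : x ∈ (↑t : Set ℕ)
    · filter_upwards with m h; exact absurd hx h
    · have h1 : (↑t : Set ℕ) ⊂ (↑t : Set ℕ) ∪ {x} := by
        refine ⟨Set.subset_union_left, fun hsub => hx ?_⟩
        exact hsub (Set.mem_union_right _ rfl)
      have h2 := hstrict _ _ h1
      have h3 := (hcont (↑t : Set ℕ)).eventually (eventually_gt_nhds h2)
      filter_upwards [h3] with m hm _
      exact hm
  have hall := (Filter.eventually_all_finset s.powerset).2 hfin
  obtain ⟨m, hm1, hm2⟩ := (hall.and (eventually_gt_atTop x)).exists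
  refine ⟨m, hm2, fun F hF hxF => ?_⟩
  have hFfin : F.Finite := (s.finite_toSet).subset hF
  have ht : hFfin.toFinset ∈ s.powerset := by
    rw [Finset.mem_powerset, ← Finset.coe_subset, hFfin.coe_toFinset]
    exact hF
  have := hm1 _ ht
  rw [hFfin.coe_toFinset] at this
  exact this hxF

noncomputable def sparseState (g : Set ℕ → ℝ)
    (hstrict : ∀ J J' : Set ℕ, J ⊂ J' → g J' < g J)
    (hcont : ∀ K : Set ℕ,
      Filter.Tendsto (fun m : ℕ => g (K ∪ Set.Ici m)) Filter.atTop (nhds (g K))) :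
    ℕ → ℕ × Finset ℕ
  | 0 => (0, ∅)
  | n + 1 =>
    ((sparse_key g hstrict hcont (sparseState g hstrict hcont n).2
        (sparseState g hstrict hcont n).1).choose,
      insert (sparseState g hstrict hcont n).1 (sparseState g hstrict hcont n).2)

/-- Abstract form of Lemma 5.6: if `g : Set ℕ → ℝ` is strictly antitone and continuous
from above along tails, then there is a sparse set `M = range μ` such that `g` restricted
to subsets of `M` is strictly decreasing with respect to the lexicographic order. -/
theorem exists_sparse_set_lex_strict_anti (g : Set ℕ → ℝ)
    (hstrict : ∀ J J' : Set ℕ, J ⊂ J' → g J' < g J)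
    (hcont : ∀ K : Set ℕ,
      Filter.Tendsto (fun m : ℕ => g (K ∪ Set.Ici m)) Filter.atTop (nhds (g K))) :
    ∃ μ : ℕ → ℕ, StrictMono μ ∧
      ∀ J' J'' : Set ℕ, J' ⊆ Set.range μ → J'' ⊆ Set.range μ →
        (∃ x : ℕ, x ∈ J'' ∧ x ∉ J' ∧ J' ∩ {y | y < x} = J'' ∩ {y | y < x}) →
        g J'' < g J' := by
  set st := sparseState g hstrict hcont with hst
  set μ : ℕ → ℕ := fun n => (st n).1 with hμ
  -- monotone auxiliary lemma
  have gmono : ∀ A B : Set ℕ, A ⊆ B → g B ≤ g A := by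
    intro A B hAB
    rcases eq_or_ne A B with h | h
    · rw [h]
    · exact (hstrict A B (hAB.ssubset_of_ne h)).le
  have hspec : ∀ n, μ (n + 1) = (sparse_key g hstrict hcont (st n).2 (μ n)).choose ∧
      (st (n + 1)).2 = insert (μ n) (st n).2 := by
    intro n
    constructor <;> rfl
  have hgt : ∀ n, μ n < μ (n + 1) := by
    intro n
    rw [(hspec n).1]
    exact (sparse_key g hstrict hcont (st n).2 (μ n)).choose_spec.1
  have hmono : StrictMono μ := strictMono_nat_of_lt_succ hgt
  -- key tail property
  have hkey : ∀ n, ∀ F : Set ℕ, F ⊆ ↑(st n).2 → μ n ∉ F →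
      g (F ∪ {μ n}) < g (F ∪ Set.Ici (μ (n + 1))) := by
    intro n F hF hxF
    rw [(hspec n).1]
    exact (sparse_key g hstrict hcont (st n).2 (μ n)).choose_spec.2 F hF hxF
  -- membership of earlier values in state
  have hmem : ∀ n k, k < n → μ k ∈ (st n).2 := by
    intro n
    induction n with
    | zero => intro k hk; omega
    | succ n ih =>
      intro k hk
      rw [(hspec n).2]
      rcases Nat.lt_succ_iff_lt_or_eq.1 hk with h | h
      · exact Finset.mem_insert_of_mem (ih k h)
      · exact h ▸ Finset.mem_insert_self _ _
  refine ⟨μ, hmono, ?_⟩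
  rintro J' J'' hJ' hJ'' ⟨x, hxJ'', hxJ', hcomm⟩
  obtain ⟨n, rfl⟩ := hJ'' hxJ''
  set C : Set ℕ := J'' ∩ {y | y < μ n} with hC
  have hCJ' : C = J' ∩ {y | y < μ n} := hcomm.symm
  -- C ⊆ state n
  have hCsub : C ⊆ ↑(st n).2 := by
    rintro y ⟨hy1, hy2⟩
    obtain ⟨k, rfl⟩ := hJ'' hy1
    exact hmem n k (hmono.lt_iff_lt.1 hy2)
  have hxC : μ n ∉ C := by
    rw [hCJ']
    exact fun h => hxJ' h.1
  have h1 : g (C ∪ {μ n}) < g (C ∪ Set.Ici (μ (n + 1))) := hkey n C hCsub hxC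
  have h2 : g J'' ≤ g (C ∪ {μ n}) := by
    apply gmono
    rintro y (hy | hy)
    · exact hy.1
    · exact hy ▸ hxJ''
  have h3 : g (C ∪ Set.Ici (μ (n + 1))) ≤ g J' := by
    apply gmono
    intro y hy
    obtain ⟨k, rfl⟩ := hJ' hy
    rcases lt_trichotomy (μ k) (μ n) with h | h | h
    · exact Or.inl (by rw [hCJ']; exact ⟨hy, h⟩)
    · exact absurd (h ▸ hy) hxJ'
    · refine Or.inr ?_
      have : n < k := hmono.lt_iff_lt.1 h
      exact hmono.monotone this
  calc g J'' ≤ g (C ∪ {μ n}) := h2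
    _ < g (C ∪ Set.Ici (μ (n + 1))) := h1
    _ ≤ g J' := h3
end

section
/- Let g : Set ℕ → ℝ satisfy: (i) strict antitonicity: for all J ⊊ J', g(J') < g(J); and (ii) continuity from above along tails: for every K ⊆ ℕ, the sequence m ↦ g(K ∪ Set.Ici m) tends to g(K) as m → ∞. Then the range of g has cardinality at least that of the continuum: Cardinal.continuum ≤ Cardinal.mk (Set.range g). In particular, the set of values of g has cardinality of the continuum. -/
open Filter

namespace RangeContAux

/-- A node of the binary tree: a set `J` bounded above by `m`. -/
structure Node where
  J : Set ℕ
  m : ℕ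
  bound : ∀ n ∈ J, n < m

variable (g : Set ℕ → ℝ)
variable (hstrict : ∀ J J' : Set ℕ, J ⊂ J' → g J' < g J)
variable (hcont : ∀ K : Set ℕ,
      Filter.Tendsto (fun m : ℕ => g (K ∪ Set.Ici m)) Filter.atTop (nhds (g K)))

include hstrict in
theorem gmono {A B : Set ℕ} (h : A ⊆ B) : g B ≤ g A := by
  rcases eq_or_lt_of_le (show A ≤ B from h) with rfl | h'
  · exact le_refl _
  · exact (hstrict _ _ h').le

include hstrict hcont in
theorem exists_next (J : Set ℕ) (m : ℕ) (hJ : ∀ n ∈ J, n < m) :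
    ∃ m', m < m' ∧ g (J ∪ {m}) < g (J ∪ Set.Ici m') := by
  have hm : m ∉ J := fun h => lt_irrefl m (hJ m h)
  have hlt : g (J ∪ {m}) < g J := by
    apply hstrict
    constructor
    · exact Set.subset_union_left
    · intro hsub
      exact hm (hsub (Set.mem_union_right _ rfl))
  have h1 : ∀ᶠ k in atTop, g (J ∪ {m}) < g (J ∪ Set.Ici k) :=
    (hcont J).eventually (eventually_gt_nhds hlt)
  have h2 : ∀ᶠ k in atTop, m < k := eventually_gt_atTop m
  rcases (h1.and h2).exists with ⟨m', hgt, hm'⟩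
  exact ⟨m', hm', hgt⟩

noncomputable def step (nd : Node) (b : Bool) : Node :=
  if b then
    ⟨nd.J, Classical.choose (exists_next g hstrict hcont nd.J nd.m nd.bound),
      fun n hn => lt_trans (nd.bound n hn)
        (Classical.choose_spec (exists_next g hstrict hcont nd.J nd.m nd.bound)).1⟩
  else
    ⟨nd.J ∪ {nd.m}, nd.m + 1, by
      intro n hn
      rcases hn with hn | hn
      · exact lt_trans (nd.bound n hn) (Nat.lt_succ_self _)
      · simp only [Set.mem_singleton_iff] at hn
        omega⟩

theorem step_m (nd : Node) (b : Bool) : nd.m < (step g hstrict hcont nd b).m := by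
  cases b with
  | true => exact (Classical.choose_spec (exists_next g hstrict hcont nd.J nd.m nd.bound)).1
  | false => exact Nat.lt_succ_self _

theorem step_J_subset (nd : Node) (b : Bool) : nd.J ⊆ (step g hstrict hcont nd b).J := by
  cases b with
  | true => exact subset_refl _
  | false => exact Set.subset_union_left

theorem step_new (nd : Node) (b : Bool) :
    ∀ n ∈ (step g hstrict hcont nd b).J, n ∈ nd.J ∨ nd.m ≤ n := by
  cases b with
  | true => exact fun n hn => Or.inl hn
  | false =>
      intro n hn
      rcases hn with hn | hn
      · exact Or.inl hn
      · simp only [Set.mem_singleton_iff] at hn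
        exact Or.inr (le_of_eq hn.symm)

theorem step_true_J (nd : Node) : (step g hstrict hcont nd true).J = nd.J := rfl

theorem step_false_J (nd : Node) : (step g hstrict hcont nd false).J = nd.J ∪ {nd.m} := rfl

theorem step_sep (nd : Node) :
    g (nd.J ∪ {nd.m}) < g (nd.J ∪ Set.Ici (step g hstrict hcont nd true).m) :=
  (Classical.choose_spec (exists_next g hstrict hcont nd.J nd.m nd.bound)).2

/-- Follow the branch `x` through the tree. -/
noncomputable def F (x : ℕ → Bool) : ℕ → Node
  | 0 => ⟨∅, 0, by simp⟩
  | n + 1 => step g hstrict hcont (F x n) (x n)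

theorem F_m_mono (x : ℕ → Bool) : StrictMono fun n => (F g hstrict hcont x n).m :=
  strictMono_nat_of_lt_succ fun n => step_m g hstrict hcont _ _

theorem F_J_mono (x : ℕ → Bool) : Monotone fun n => (F g hstrict hcont x n).J :=
  monotone_nat_of_le_succ fun n => step_J_subset g hstrict hcont _ _

theorem F_tail (x : ℕ → Bool) (n : ℕ) :
    ∀ k, n ≤ k → ∀ j ∈ (F g hstrict hcont x k).J,
      j ∈ (F g hstrict hcont x n).J ∨ (F g hstrict hcont x n).m ≤ j := by
  intro k
  induction k with
  | zero =>
      intro hk j hj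
      have hn0 : n = 0 := Nat.le_zero.mp hk
      subst hn0
      exact Or.inl hj
  | succ k ih =>
      intro hk j hj
      rcases Nat.lt_or_ge n (k + 1) with h | h
      · have hk' : n ≤ k := Nat.lt_succ_iff.mp h
        rcases step_new g hstrict hcont (F g hstrict hcont x k) (x k) j hj with hj' | hj'
        · exact ih hk' j hj'
        · exact Or.inr (le_trans ((F_m_mono g hstrict hcont x).monotone hk') hj')
      · have : n = k + 1 := le_antisymm hk h
        subst this
        exact Or.inl hj

theorem F_agree (x y : ℕ → Bool) (n : ℕ) (h : ∀ i < n, x i = y i) :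
    F g hstrict hcont x n = F g hstrict hcont y n := by
  induction n with
  | zero => rfl
  | succ n ih =>
      have h1 : F g hstrict hcont x n = F g hstrict hcont y n :=
        ih fun i hi => h i (Nat.lt_succ_of_lt hi)
      show step g hstrict hcont (F g hstrict hcont x n) (x n)
        = step g hstrict hcont (F g hstrict hcont y n) (y n)
      rw [h1, h n (Nat.lt_succ_self n)]

/-- The limit set along the branch `x`. -/
def L (x : ℕ → Bool) : Set ℕ := ⋃ n, (F g hstrict hcont x n).J

theorem node_subset_L (x : ℕ → Bool) (n : ℕ) :
    (F g hstrict hcont x n).J ⊆ L g hstrict hcont x :=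
  Set.subset_iUnion (fun n => (F g hstrict hcont x n).J) n

theorem L_subset (x : ℕ → Bool) (n : ℕ) :
    L g hstrict hcont x ⊆ (F g hstrict hcont x n).J ∪ Set.Ici (F g hstrict hcont x n).m := by
  intro j hj
  rcases Set.mem_iUnion.mp hj with ⟨k, hk⟩
  rcases le_or_gt n k with h | h
  · rcases F_tail g hstrict hcont x n k h j hk with h' | h'
    · exact Set.mem_union_left _ h'
    · exact Set.mem_union_right _ h'
  · exact Set.mem_union_left _ (F_J_mono g hstrict hcont x h.le hk)

theorem L_bounds (x : ℕ → Bool) (n : ℕ) :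
    g ((F g hstrict hcont x n).J ∪ Set.Ici (F g hstrict hcont x n).m)
      ≤ g (L g hstrict hcont x) ∧
    g (L g hstrict hcont x) ≤ g ((F g hstrict hcont x n).J) :=
  ⟨gmono g hstrict (L_subset g hstrict hcont x n),
   gmono g hstrict (node_subset_L g hstrict hcont x n)⟩

theorem sep (x y : ℕ → Bool) (n : ℕ)
    (hnd : F g hstrict hcont x n = F g hstrict hcont y n)
    (hx : x n = true) (hy : y n = false) :
    g (L g hstrict hcont y) < g (L g hstrict hcont x) := by
  set nd := F g hstrict hcont x n with hnddef
  have hy1 : g (L g hstrict hcont y) ≤ g (nd.J ∪ {nd.m}) := by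
    have h := (L_bounds g hstrict hcont y (n + 1)).2
    have hF : F g hstrict hcont y (n + 1) = step g hstrict hcont nd false := by
      show step g hstrict hcont (F g hstrict hcont y n) (y n) = _
      rw [← hnd, hy]
    rw [hF, step_false_J] at h
    exact h
  have hx1 : g (nd.J ∪ Set.Ici (step g hstrict hcont nd true).m)
      ≤ g (L g hstrict hcont x) := by
    have h := (L_bounds g hstrict hcont x (n + 1)).1
    have hF : F g hstrict hcont x (n + 1) = step g hstrict hcont nd true := by
      show step g hstrict hcont (F g hstrict hcont x n) (x n) = _
      rw [hx]
    rw [hF, step_true_J] at h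
    exact h
  exact lt_of_le_of_lt hy1 (lt_of_lt_of_le (step_sep g hstrict hcont nd) hx1)

theorem inj : Function.Injective fun x : ℕ → Bool => g (L g hstrict hcont x) := by
  intro x y hxy
  by_contra hne
  have hex : ∃ n, x n ≠ y n := by
    by_contra h
    push_neg at h
    exact hne (funext h)
  classical
  have hn : x (Nat.find hex) ≠ y (Nat.find hex) := Nat.find_spec hex
  set n := Nat.find hex with hndef
  have hagree : ∀ i < n, x i = y i := fun i hi => by
    by_contra h
    exact Nat.find_min hex hi h
  have hnd : F g hstrict hcont x n = F g hstrict hcont y n :=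
    F_agree g hstrict hcont x y n hagree
  simp only at hxy
  cases hxn : x n with
  | true =>
      have hyn : y n = false := by
        cases hyn : y n with
        | true => exact absurd (hxn.trans hyn.symm) hn
        | false => rfl
      exact absurd hxy (ne_of_gt (sep g hstrict hcont x y n hnd hxn hyn))
  | false =>
      have hyn : y n = true := by
        cases hyn : y n with
        | true => rfl
        | false => exact absurd (hxn.trans hyn.symm) hn
      exact absurd hxy (ne_of_lt (sep g hstrict hcont y x n hnd.symm hyn hxn))

end RangeContAux

/-- Abstract form of the Main Lemma: if `g : Set ℕ → ℝ` is strictly antitone and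
continuous from above along tails, then `g` attains continuum many values. -/
theorem range_has_cardinality_continuum (g : Set ℕ → ℝ)
    (hstrict : ∀ J J' : Set ℕ, J ⊂ J' → g J' < g J)
    (hcont : ∀ K : Set ℕ,
      Filter.Tendsto (fun m : ℕ => g (K ∪ Set.Ici m)) Filter.atTop (nhds (g K))) :
    Cardinal.continuum ≤ Cardinal.mk (Set.range g) := by
  have hinj : Function.Injective
      (fun x : ℕ → Bool => (⟨g (RangeContAux.L g hstrict hcont x),
        ⟨RangeContAux.L g hstrict hcont x, rfl⟩⟩ : Set.range g)) := by
    intro x y hxy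
    apply RangeContAux.inj g hstrict hcont
    exact congrArg Subtype.val hxy
  have hle : Cardinal.mk (ℕ → Bool) ≤ Cardinal.mk (Set.range g) :=
    Cardinal.mk_le_of_injective hinj
  have heq : Cardinal.mk (ℕ → Bool) = Cardinal.continuum := by
    rw [← Cardinal.power_def, Cardinal.mk_bool, Cardinal.mk_nat,
      Cardinal.two_power_aleph0]
  rwa [heq] at hle
end
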